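/- arXiv:1311.4181 — 11 statements merged into one kernel-verified Lean document; each statement's English description precedes it below -/
import Mathlib

section
/- For a Jacobi algebra (A, {•,•}_J) over a commutative ring R, the map Φ : A → Der_R(A) defined by Φ_a(b) = {a, b}_J + b·{1, a}_J is well-defined (each Φ_a is an R-linear derivation of A) and is a homomorphism of Lie algebras, i.e., Φ_{{a,b}_J} = [Φ_a, Φ_b]. -/
/-- For a Jacobi algebra `(A, J)` over a commutative ring `R`,
the map `Φ : A → Der_R(A)`, `Φ_a(b) = J a b + b * J 1 a`, is well defined
(each `Φ_a` is an `R`-linear derivation) and is a Lie algebra homomorphism. -/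
theorem jacobi_hamiltonian_lie_hom
    (R A : Type*) [CommRing R] [CommRing A] [Algebra R A]
    (J : A → A → A)
    (hbilₗ : ∀ (r : R) (a a' b : A), J (r • a + a') b = r • J a b + J a' b)
    (hbilᵣ : ∀ (r : R) (a b b' : A), J a (r • b + b') = r • J a b + J a b')
    (hskew : ∀ a b, J a b = - J b a)
    (hjacobi : ∀ a b c, J a (J b c) + J b (J c a) + J c (J a b) = 0)
    (hleib : ∀ a b c, J (a * b) c = a * J b c + b * J a c - a * b * J 1 c) :
    -- each `Φ_a` is `R`-linear
    (∀ (a : A) (r : R) (x y : A),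
        (J a (r • x + y) + (r • x + y) * J 1 a)
          = r • (J a x + x * J 1 a) + (J a y + y * J 1 a)) ∧
    -- each `Φ_a` is a derivation
    (∀ a b c : A,
        J a (b * c) + (b * c) * J 1 a
          = b * (J a c + c * J 1 a) + c * (J a b + b * J 1 a)) ∧
    -- `Φ` is a Lie algebra homomorphism: `Φ_{J a b} = [Φ_a, Φ_b]`
    (∀ a b c : A,
        J (J a b) c + c * J 1 (J a b)
          = (J a (J b c + c * J 1 b) + (J b c + c * J 1 b) * J 1 a)
            - (J b (J a c + c * J 1 a) + (J a c + c * J 1 a) * J 1 b)) := by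
  have h0 : ∀ a : A, J a 0 = 0 := by
    intro a
    have h := hbilᵣ (1 : R) a 0 0
    simp only [one_smul, add_zero] at h
    linear_combination -h
  have hadd : ∀ a x y : A, J a (x + y) = J a x + J a y := by
    intro a x y
    have h := hbilᵣ (1 : R) a x y
    simpa using h
  have hneg : ∀ a x : A, J a (-x) = - J a x := by
    intro a x
    have h := hbilᵣ (-1 : R) a x 0
    simp only [neg_smul, one_smul, add_zero, h0] at h
    simpa using h
  -- J a (c * d) = c * J a d + d * J a c + c * d * J 1 a
  have hmul : ∀ a c d : A, J a (c * d) = c * J a d + d * J a c + c * d * J 1 a := by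
    intro a c d
    rw [hskew a (c * d), hleib c d a, hskew d a, hskew c a]
    ring
  -- J 1 (J a b) = J a (J 1 b) - J b (J 1 a)
  have hDJ : ∀ a b : A, J 1 (J a b) = J a (J 1 b) - J b (J 1 a) := by
    intro a b
    have h := hjacobi 1 a b
    rw [hskew b 1, hneg] at h
    linear_combination h
  -- J (J a b) c = J a (J b c) - J b (J a c)
  have key : ∀ a b c : A, J (J a b) c = J a (J b c) - J b (J a c) := by
    intro a b c
    have h := hjacobi a b c
    rw [hskew c a, hneg, hskew c (J a b)] at h
    linear_combination -h
  refine ⟨?_, ?_, ?_⟩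
  · intro a r x y
    rw [hbilᵣ r a x y]
    simp only [smul_add, add_mul, smul_mul_assoc]
    abel
  · intro a b c
    rw [hmul a b c]
    ring
  · intro a b c
    rw [hadd a (J b c) (c * J 1 b), hadd b (J a c) (c * J 1 a),
      hmul a c (J 1 b), hmul b c (J 1 a), hDJ a b, key a b c]
    ring
end

section
/- Let (A, {•,•}_J) be a Jacobi algebra over a field k. Then the pair (A, A ⊗ A) is a Lie–Rinehart algebra with anchor ρ(a ⊗ b) = a·Φ_b (where Φ_b = {b,•}_J + •·{1,b}_J) and Lie bracket [a ⊗ f, b ⊗ g] = a·b ⊗ {f,g}_J + a·Φ_f(b) ⊗ g − b·Φ_g(a) ⊗ f, where A acts on A ⊗ A via the first tensor factor. -/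
/-!
By the Leibniz rule of `J`, each `Φ_f = J f · + · J 1 f` is a derivation of `A`, and the Jacobi
identity applied to `(f, g, c)` and to `(1, f, g)` gives `Φ_{J f g} = [Φ_f, Φ_g]`. So `(A, J)` is a
Lie algebra acting on `A` by derivations, and `A ⊗ A` is its action Lie–Rinehart algebra. For any
Lie algebra `g` acting on `A` by derivations, the bracket on `A ⊗ g` satisfies the Leibniz rule and
its anchor is a Lie morphism; these two facts make its Jacobiator `A`-linear in each argument, so
it vanishes because it does on the elements `1 ⊗ x`, where the bracket is the one of `g`.
-/

open TensorProduct

section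
variable {k A : Type*} [CommRing k] [CommRing A] [Algebra k A]

def Derivation.toLinearMapₗ : Derivation k A A →ₗ[k] A →ₗ[k] A where
  toFun D := D
  map_add' := Derivation.coe_add_linearMap
  map_smul' := Derivation.coe_smul_linearMap

end

section SMulAdd

variable {k M N P : Type*} [CommRing k] [AddCommGroup M] [Module k M] [AddCommGroup N] [Module k N]
  [AddCommGroup P] [Module k P]

lemma isLinearMap_of_smul_add {f : M → N} (h : ∀ (r : k) x y, f (r • x + y) = r • f x + f y) :
    IsLinearMap k f := by
  have h0 : f 0 = 0 := by simpa using h 1 0 0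
  exact ⟨fun x y => by simpa using h 1 x y, fun r x => by simpa [h0] using h r x 0⟩

noncomputable def LinearMap.mk₂OfSMulAdd (J : M → N → P)
    (hl : ∀ (r : k) a a' b, J (r • a + a') b = r • J a b + J a' b)
    (hr : ∀ (r : k) a b b', J a (r • b + b') = r • J a b + J a b') : M →ₗ[k] N →ₗ[k] P :=
  LinearMap.mk₂ k J
    (fun a a' b => (isLinearMap_of_smul_add (f := (J · b)) (hl · · · b)).map_add a a')
    (fun r a b => (isLinearMap_of_smul_add (f := (J · b)) (hl · · · b)).map_smul r a)
    (fun a => (isLinearMap_of_smul_add (f := J a) (hr · a)).map_add)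
    (fun r a => (isLinearMap_of_smul_add (f := J a) (hr · a)).map_smul r)

end SMulAdd

section Jacobiator

variable {k M : Type*} [CommRing k] [AddCommGroup M] [Module k M]

def jacobiator (br : M →ₗ[k] M →ₗ[k] M) (u v w : M) : M :=
  br u (br v w) + br v (br w u) + br w (br u v)

variable (br : M →ₗ[k] M →ₗ[k] M)

lemma jacobiator_rotate (u v w : M) : jacobiator br u v w = jacobiator br v w u := by
  unfold jacobiator; abel

@[simp] lemma jacobiator_zero_right (u v : M) : jacobiator br u v 0 = 0 := by
  simp [jacobiator]

lemma jacobiator_add_right (u v w w' : M) :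
    jacobiator br u v (w + w') = jacobiator br u v w + jacobiator br u v w' := by
  simp only [jacobiator, map_add, LinearMap.add_apply]; abel

end Jacobiator

namespace ActionLieRinehart

variable {k A g : Type*} [CommRing k] [CommRing A] [Algebra k A] [AddCommGroup g] [Module k g]
  (B : g →ₗ[k] g →ₗ[k] g) (φ : g →ₗ[k] Derivation k A A)

noncomputable def anchor : A ⊗[k] g →ₗ[A] Derivation k A A := φ.liftBaseChange A

@[simp] lemma anchor_tmul (a : A) (x : g) : anchor φ (a ⊗ₜ x) = a • φ x := rfl

noncomputable def baseChangeBracket : A ⊗[k] g →ₗ[k] A ⊗[k] g →ₗ[k] A ⊗[k] g :=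
  TensorProduct.curry <| TensorProduct.map (LinearMap.mul' k A) (TensorProduct.lift B) ∘ₗ
    (TensorProduct.tensorTensorTensorComm k A g A g).toLinearMap

noncomputable def anchorAction : A ⊗[k] g →ₗ[k] A ⊗[k] g →ₗ[k] A ⊗[k] g :=
  LinearMap.rTensorHom g ∘ₗ Derivation.toLinearMapₗ ∘ₗ (anchor φ).restrictScalars k

noncomputable def bracket : A ⊗[k] g →ₗ[k] A ⊗[k] g →ₗ[k] A ⊗[k] g :=
  LinearMap.mk₂ k (fun u v => baseChangeBracket B u v + anchorAction φ u v - anchorAction φ v u)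
    (fun u u' v => by simp only [map_add, LinearMap.add_apply]; abel)
    (fun r u v => by simp only [map_smul, LinearMap.smul_apply, smul_add, smul_sub])
    (fun u v v' => by simp only [map_add, LinearMap.add_apply]; abel)
    (fun r u v => by simp only [map_smul, LinearMap.smul_apply, smul_add, smul_sub])

lemma bracket_tmul (a b : A) (x y : g) :
    bracket B φ (a ⊗ₜ x) (b ⊗ₜ y) = (a * b) ⊗ₜ B x y + (a * φ x b) ⊗ₜ y - (b * φ y a) ⊗ₜ x := by
  simp [bracket, baseChangeBracket, anchorAction, Derivation.toLinearMapₗ]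

lemma bracket_skew (hB : ∀ x y, B x y = -B y x) (u v : A ⊗[k] g) :
    bracket B φ u v = -bracket B φ v u := by
  induction u using TensorProduct.induction_on with
  | zero => simp
  | add u u' hu hu' => rw [map_add, LinearMap.add_apply, map_add, hu, hu', neg_add]
  | tmul a x =>
    induction v using TensorProduct.induction_on with
    | zero => simp
    | add v v' hv hv' => rw [map_add, map_add, LinearMap.add_apply, hv, hv', neg_add]
    | tmul b y =>
      rw [bracket_tmul, bracket_tmul, hB x y, tmul_neg, mul_comm b a]
      abel

lemma bracket_smul_right (u : A ⊗[k] g) (a : A) (v : A ⊗[k] g) :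
    bracket B φ u (a • v) = a • bracket B φ u v + anchor φ u a • v := by
  induction u using TensorProduct.induction_on with
  | zero => simp
  | add u u' hu hu' =>
    simp only [map_add, LinearMap.add_apply, Derivation.add_apply, hu, hu', add_smul, smul_add]
    abel
  | tmul c x =>
    induction v using TensorProduct.induction_on with
    | zero => simp
    | add v v' hv hv' => simp only [smul_add, map_add, hv, hv']; abel
    | tmul b y =>
      simp only [smul_tmul', smul_eq_mul, bracket_tmul, anchor_tmul, Derivation.smul_apply,
        Derivation.leibniz, smul_add, smul_sub, mul_add, add_tmul]
      ring_nf
      abel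

lemma anchor_bracket (hφ : ∀ x y, φ (B x y) = ⁅φ x, φ y⁆) (u v : A ⊗[k] g) :
    anchor φ (bracket B φ u v) = ⁅anchor φ u, anchor φ v⁆ := by
  induction u using TensorProduct.induction_on with
  | zero => simp
  | add u u' hu hu' => simp only [map_add, LinearMap.add_apply, hu, hu', add_lie]
  | tmul a x =>
    induction v using TensorProduct.induction_on with
    | zero => simp
    | add v v' hv hv' => simp only [map_add, hv, hv', lie_add]
    | tmul b y =>
      ext c
      simp only [bracket_tmul, map_add, map_sub, anchor_tmul, hφ, Derivation.add_apply,
        Derivation.sub_apply, Derivation.smul_apply, Derivation.commutator_apply,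
        Derivation.leibniz, smul_eq_mul]
      ring

lemma bracket_one_tmul_one_tmul (x y : g) :
    bracket B φ ((1 : A) ⊗ₜ x) ((1 : A) ⊗ₜ y) = (1 : A) ⊗ₜ B x y := by
  simp [bracket_tmul]

lemma bracket_smul_left (hB : ∀ x y, B x y = -B y x) (a : A) (u v : A ⊗[k] g) :
    bracket B φ (a • u) v = a • bracket B φ u v - anchor φ v a • u := by
  rw [bracket_skew B φ hB, bracket_smul_right, bracket_skew B φ hB v u, smul_neg]
  abel

lemma jacobiator_smul_right (hB : ∀ x y, B x y = -B y x) (hφ : ∀ x y, φ (B x y) = ⁅φ x, φ y⁆)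
    (u v w : A ⊗[k] g) (a : A) :
    jacobiator (bracket B φ) u v (a • w) = a • jacobiator (bracket B φ) u v w := by
  simp only [jacobiator, bracket_smul_right, bracket_smul_left B φ hB, map_add, map_sub,
    anchor_bracket B φ hφ, Derivation.commutator_apply, smul_add]
  rw [bracket_skew B φ hB w u]
  simp only [map_neg, smul_neg]
  module

lemma jacobiator_eq_zero_of_one_tmul (hB : ∀ x y, B x y = -B y x)
    (hφ : ∀ x y, φ (B x y) = ⁅φ x, φ y⁆) {u v : A ⊗[k] g}
    (h : ∀ z : g, jacobiator (bracket B φ) u v ((1 : A) ⊗ₜ z) = 0) (w : A ⊗[k] g) :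
    jacobiator (bracket B φ) u v w = 0 := by
  induction w using TensorProduct.induction_on with
  | zero => simp
  | add w w' hw hw' => rw [jacobiator_add_right, hw, hw', add_zero]
  | tmul c z =>
    rw [← mul_one c, ← smul_eq_mul, ← smul_tmul', jacobiator_smul_right B φ hB hφ, h, smul_zero]

lemma bracket_jacobi (hB : ∀ x y, B x y = -B y x)
    (hBjac : ∀ x y z, B x (B y z) + B y (B z x) + B z (B x y) = 0)
    (hφ : ∀ x y, φ (B x y) = ⁅φ x, φ y⁆) (u v w : A ⊗[k] g) :
    jacobiator (bracket B φ) u v w = 0 := by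
  refine jacobiator_eq_zero_of_one_tmul B φ hB hφ (fun z => ?_) w
  rw [← jacobiator_rotate]
  refine jacobiator_eq_zero_of_one_tmul B φ hB hφ (fun y => ?_) v
  rw [← jacobiator_rotate]
  refine jacobiator_eq_zero_of_one_tmul B φ hB hφ (fun x => ?_) u
  simp only [jacobiator, bracket_one_tmul_one_tmul, ← tmul_add, hBjac, tmul_zero]

end ActionLieRinehart

section JacobiAlgebra

variable {k A : Type*} [CommRing k] [CommRing A] [Algebra k A] (J : A →ₗ[k] A →ₗ[k] A)

lemma jacobi_apply_mul (hskew : ∀ a b, J a b = -J b a)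
    (hleib : ∀ a b c, J (a * b) c = a * J b c + b * J a c - a * b * J 1 c) (f x y : A) :
    J f (x * y) = x * J f y + y * J f x + x * y * J 1 f := by
  rw [hskew f, hleib, hskew y f, hskew x f]
  ring

noncomputable def jacobiDerivation (hskew : ∀ a b, J a b = -J b a)
    (hleib : ∀ a b c, J (a * b) c = a * J b c + b * J a c - a * b * J 1 c) :
    A →ₗ[k] Derivation k A A where
  toFun f := Derivation.mk' (J f + (LinearMap.mul k A).flip (J 1 f)) fun x y => by
    simp only [LinearMap.add_apply, LinearMap.flip_apply, LinearMap.mul_apply', smul_eq_mul,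
      jacobi_apply_mul J hskew hleib]
    ring
  map_add' f f' := by ext c; simp; ring
  map_smul' r f := by ext c; simp

@[simp] lemma jacobiDerivation_apply (hskew : ∀ a b, J a b = -J b a)
    (hleib : ∀ a b c, J (a * b) c = a * J b c + b * J a c - a * b * J 1 c) (f c : A) :
    jacobiDerivation J hskew hleib f c = J f c + c * J 1 f := rfl

lemma jacobiDerivation_bracket (hskew : ∀ a b, J a b = -J b a)
    (hjacobi : ∀ a b c, J a (J b c) + J b (J c a) + J c (J a b) = 0)
    (hleib : ∀ a b c, J (a * b) c = a * J b c + b * J a c - a * b * J 1 c) (f g : A) :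
    jacobiDerivation J hskew hleib (J f g) =
      ⁅jacobiDerivation J hskew hleib f, jacobiDerivation J hskew hleib g⁆ := by
  ext c
  have hfgc := hjacobi f g c
  rw [hskew c f, map_neg, hskew c (J f g)] at hfgc
  have h1fg := hjacobi 1 f g
  rw [hskew g 1, map_neg] at h1fg
  simp only [Derivation.commutator_apply, jacobiDerivation_apply, map_add,
    jacobi_apply_mul J hskew hleib]
  linear_combination -hfgc + c * h1fg

end JacobiAlgebra

/-- For a Jacobi algebra `(A, J)` over a field `k`, the pair
`(A, A ⊗ A)` is a Lie–Rinehart algebra with anchor `ρ (a ⊗ b) = a·Φ_b` and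
bracket `[a⊗f, b⊗g] = ab ⊗ J f g + a·Φ_f(b) ⊗ g - b·Φ_g(a) ⊗ f`, where
`Φ_b c = J b c + c * J 1 b` and `A` acts via the first tensor factor. -/
theorem jacobi_tensor_lie_rinehart
    (k A : Type*) [Field k] [CommRing A] [Algebra k A]
    (J : A → A → A)
    (hbilₗ : ∀ (r : k) (a a' b : A), J (r • a + a') b = r • J a b + J a' b)
    (hbilᵣ : ∀ (r : k) (a b b' : A), J a (r • b + b') = r • J a b + J a b')
    (hskew : ∀ a b, J a b = - J b a)
    (hjacobi : ∀ a b c, J a (J b c) + J b (J c a) + J c (J a b) = 0)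
    (hleib : ∀ a b c, J (a * b) c = a * J b c + b * J a c - a * b * J 1 c) :
    ∃ (br : A ⊗[k] A → A ⊗[k] A → A ⊗[k] A) (ρ : A ⊗[k] A → A → A),
      -- defining formulas on simple tensors
      (∀ a f b g : A,
        br (a ⊗ₜ[k] f) (b ⊗ₜ[k] g)
          = (a * b) ⊗ₜ[k] J f g
            + (a * (J f b + b * J 1 f)) ⊗ₜ[k] g
            - (b * (J g a + a * J 1 g)) ⊗ₜ[k] f) ∧
      (∀ a b c : A, ρ (a ⊗ₜ[k] b) c = a * (J b c + c * J 1 b)) ∧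
      -- `k`-bilinearity of the bracket
      (∀ (r : k) (u u' v : A ⊗[k] A), br (r • u + u') v = r • br u v + br u' v) ∧
      (∀ (r : k) (u v v' : A ⊗[k] A), br u (r • v + v') = r • br u v + br u v') ∧
      -- Lie algebra axioms
      (∀ u v, br u v = - br v u) ∧
      (∀ u v w, br u (br v w) + br v (br w u) + br w (br u v) = 0) ∧
      -- anchor: `A`-linear, additive, valued in `k`-linear derivations
      (∀ (a : A) (u : A ⊗[k] A) (c : A), ρ (a • u) c = a * ρ u c) ∧
      (∀ (u v : A ⊗[k] A) (c : A), ρ (u + v) c = ρ u c + ρ v c) ∧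
      (∀ (u : A ⊗[k] A) (r : k) (x y : A), ρ u (r • x + y) = r • ρ u x + ρ u y) ∧
      (∀ (u : A ⊗[k] A) (x y : A), ρ u (x * y) = x * ρ u y + y * ρ u x) ∧
      -- anchor is a Lie algebra homomorphism
      (∀ (u v : A ⊗[k] A) (c : A), ρ (br u v) c = ρ u (ρ v c) - ρ v (ρ u c)) ∧
      -- Leibniz rule of a Lie–Rinehart algebra
      (∀ (u : A ⊗[k] A) (a : A) (v : A ⊗[k] A),
        br u (a • v) = a • br u v + ρ u a • v) := by
  set JL := LinearMap.mk₂OfSMulAdd (k := k) J hbilₗ hbilᵣ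
  set Φ := jacobiDerivation JL hskew hleib
  have hΦ : ∀ f g, Φ (JL f g) = ⁅Φ f, Φ g⁆ := jacobiDerivation_bracket JL hskew hjacobi hleib
  refine ⟨fun u v => ActionLieRinehart.bracket JL Φ u v, fun u c => ActionLieRinehart.anchor Φ u c,
    fun a f b g => ActionLieRinehart.bracket_tmul JL Φ a b f g,
    fun a b c => rfl,
    fun r u u' v => by simp,
    fun r u v v' => by simp,
    ActionLieRinehart.bracket_skew JL Φ hskew,
    ActionLieRinehart.bracket_jacobi JL Φ hskew hjacobi hΦ,
    fun a u c => by simp,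
    fun u v c => by simp,
    fun u r x y => by simp,
    fun u x y => by simp,
    fun u v c => by simp only [ActionLieRinehart.anchor_bracket JL Φ hΦ, Derivation.commutator_apply],
    ActionLieRinehart.bracket_smul_right JL Φ⟩
end

section
/- Let (A, {•,•}_J) be a Jacobi algebra over a field k and I the kernel of multiplication A ⊗ A → A. The Lie bracket [a ⊗ f, b ⊗ g] = a·b ⊗ {f,g}_J + a·Φ_f(b) ⊗ g − b·Φ_g(a) ⊗ f on A ⊗ A maps (A ⊗ A)·I² into I², and the anchor a ⊗ b ↦ a·Φ_b vanishes on I². Consequently they descend to 𝒥¹(A) = (A ⊗ A)/I², making (A, 𝒥¹(A)) a Lie–Rinehart algebra with anchor ρ(j¹(a)) = Φ_a and bracket [j¹(f), j¹(g)] = j¹({f,g}_J). -/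
open TensorProduct

set_option maxHeartbeats 4000000 in
/-- For a Jacobi algebra `(A, J)` over a field `k`, the bracket
`[a⊗f, b⊗g] = ab ⊗ J f g + a·Φ_f(b) ⊗ g - b·Φ_g(a) ⊗ f` on `A ⊗ A` maps
`(A ⊗ A)·I²` into `I²` and the anchor `a ⊗ b ↦ a·Φ_b` vanishes on `I²`;
consequently they descend to `𝒥¹(A) = (A ⊗ A)/I²`, making `(A, 𝒥¹(A))` a
Lie–Rinehart algebra with anchor `ρ (j¹ a) = Φ_a` and bracket
`[j¹ f, j¹ g] = j¹ (J f g)`. -/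
theorem jacobi_one_jet_lie_rinehart
    (k A : Type*) [Field k] [CommRing A] [Algebra k A]
    (J : A → A → A)
    (hbilₗ : ∀ (r : k) (a a' b : A), J (r • a + a') b = r • J a b + J a' b)
    (hbilᵣ : ∀ (r : k) (a b b' : A), J a (r • b + b') = r • J a b + J a b')
    (hskew : ∀ a b, J a b = - J b a)
    (hjacobi : ∀ a b c, J a (J b c) + J b (J c a) + J c (J a b) = 0)
    (hleib : ∀ a b c, J (a * b) c = a * J b c + b * J a c - a * b * J 1 c)
    -- the Lie–Rinehart structure on `(A, A ⊗ A)`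
    (br : A ⊗[k] A → A ⊗[k] A → A ⊗[k] A) (ρ : A ⊗[k] A → A → A)
    (hbr : ∀ a f b g : A,
      br (a ⊗ₜ[k] f) (b ⊗ₜ[k] g)
        = (a * b) ⊗ₜ[k] J f g
          + (a * (J f b + b * J 1 f)) ⊗ₜ[k] g
          - (b * (J g a + a * J 1 g)) ⊗ₜ[k] f)
    (hρ : ∀ a b c : A, ρ (a ⊗ₜ[k] b) c = a * (J b c + c * J 1 b))
    (hbrbilₗ : ∀ (r : k) (u u' v : A ⊗[k] A), br (r • u + u') v = r • br u v + br u' v)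
    (hbrbilᵣ : ∀ (r : k) (u v v' : A ⊗[k] A), br u (r • v + v') = r • br u v + br u v')
    (hρadd : ∀ (u v : A ⊗[k] A) (c : A), ρ (u + v) c = ρ u c + ρ v c)
    (hρsmul : ∀ (r : k) (u : A ⊗[k] A) (c : A), ρ (r • u) c = r • ρ u c) :
    -- (1) the bracket maps `(A ⊗ A) × I²` into `I²`
    (∀ u : A ⊗[k] A, ∀ x ∈ (KaehlerDifferential.ideal k A ^ 2 : Ideal (A ⊗[k] A)),
        br u x ∈ (KaehlerDifferential.ideal k A ^ 2 : Ideal (A ⊗[k] A))) ∧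
    -- (2) the anchor vanishes on `I²`
    (∀ x ∈ (KaehlerDifferential.ideal k A ^ 2 : Ideal (A ⊗[k] A)), ∀ c : A, ρ x c = 0) ∧
    -- (3) they descend to a Lie–Rinehart structure on `𝒥¹(A) = (A ⊗ A)/I²`
    (letI Q := (A ⊗[k] A) ⧸ (KaehlerDifferential.ideal k A ^ 2)
     letI π : A ⊗[k] A → Q := Ideal.Quotient.mk (KaehlerDifferential.ideal k A ^ 2)
     letI j1 : A → Q := fun a => π ((1 : A) ⊗ₜ[k] a)
     ∃ (brQ : Q → Q → Q) (ρQ : Q → A → A),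
      -- descent
      (∀ u v : A ⊗[k] A, brQ (π u) (π v) = π (br u v)) ∧
      (∀ (u : A ⊗[k] A) (c : A), ρQ (π u) c = ρ u c) ∧
      -- formulas on 1-jets
      (∀ f g : A, brQ (j1 f) (j1 g) = j1 (J f g)) ∧
      (∀ a c : A, ρQ (j1 a) c = J a c + c * J 1 a) ∧
      -- Lie–Rinehart axioms
      (∀ u v : Q, brQ u v = - brQ v u) ∧
      (∀ u v w : Q, brQ u (brQ v w) + brQ v (brQ w u) + brQ w (brQ u v) = 0) ∧
      (∀ (a : A) (u : Q) (c : A), ρQ (a • u) c = a * ρQ u c) ∧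
      (∀ (u v : Q) (c : A), ρQ (u + v) c = ρQ u c + ρQ v c) ∧
      (∀ (u : Q) (x y : A), ρQ u (x * y) = x * ρQ u y + y * ρQ u x) ∧
      (∀ (u v : Q) (c : A), ρQ (brQ u v) c = ρQ u (ρQ v c) - ρQ v (ρQ u c)) ∧
      (∀ (u : Q) (a : A) (v : Q), brQ u (a • v) = a • brQ u v + ρQ u a • v)) := by
  classical
  -- ============ A-level consequences of the Jacobi algebra axioms ============
  have hJ0r : ∀ a, J a 0 = 0 := by
    intro a
    have h := hbilᵣ 1 a 0 0
    simp only [one_smul, add_zero] at h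
    linear_combination -h
  have haddᵣ : ∀ a b b', J a (b + b') = J a b + J a b' := by
    intro a b b'
    have h := hbilᵣ 1 a b b'
    simpa using h
  have hnegᵣ : ∀ a b, J a (-b) = - J a b := by
    intro a b
    have h := hbilᵣ (-1) a b 0
    simp only [neg_one_smul, add_zero, hJ0r, neg_smul, one_smul] at h
    simpa using h
  have hsmulᵣ : ∀ (r : k) a b, J a (r • b) = r • J a b := by
    intro r a b
    have h := hbilᵣ r a b 0
    simpa [hJ0r] using h
  have hD : ∀ f x y, J f (x*y) = x * J f y + y * J f x + x*y*J 1 f := by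
    intro f x y
    linear_combination hskew f (x*y) - hleib x y f - x * hskew f y - y * hskew f x
  have hφ1 : ∀ f, J f 1 + 1 * J 1 f = 0 := by
    intro f; linear_combination hskew f 1
  have hφmul : ∀ f x y, J f (x*y) + (x*y) * J 1 f
      = x * (J f y + y * J 1 f) + y * (J f x + x * J 1 f) := by
    intro f x y; linear_combination hD f x y
  have hJ1mul : ∀ v v', J 1 (v*v') = v * J 1 v' + v' * J 1 v + v*v'*J 1 1 := by
    intro v v'
    linear_combination hskew 1 (v*v') - hleib v v' 1 - v * hskew 1 v' - v' * hskew 1 v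
  have e1 : ∀ f g c, J (J f g) c = J f (J g c) - J g (J f c) := by
    intro f g c
    have h := hjacobi f g c
    rw [hskew c f, hnegᵣ g (J f c), hskew c (J f g)] at h
    linear_combination -h
  have e2 : ∀ f g, J 1 (J f g) = J f (J 1 g) - J g (J 1 f) := by
    intro f g
    have h := hjacobi 1 f g
    rw [hskew g 1, hnegᵣ f (J 1 g)] at h
    linear_combination h
  have hφJ : ∀ f g c, J (J f g) c + c * J 1 (J f g)
      = (J f (J g c + c * J 1 g) + (J g c + c * J 1 g) * J 1 f)
        - (J g (J f c + c * J 1 f) + (J f c + c * J 1 f) * J 1 g) := by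
    intro f g c
    linear_combination e1 f g c + c * e2 f g - haddᵣ f (J g c) (c * J 1 g)
      + haddᵣ g (J f c) (c * J 1 f) - hD f c (J 1 g) + hD g c (J 1 f)
  -- ============ basic (bi)linearity consequences for br and ρ ============
  have braddᵣ : ∀ u v w, br u (v + w) = br u v + br u w := by
    intro u v w; simpa using hbrbilᵣ 1 u v w
  have braddₗ : ∀ u v w, br (u + v) w = br u w + br v w := by
    intro u v w; simpa using hbrbilₗ 1 u v w
  have br0ᵣ : ∀ u, br u 0 = 0 := by
    intro u; have h := braddᵣ u 0 0; simp only [add_zero] at h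
    exact (add_eq_right.mp h.symm)
  have br0ₗ : ∀ u, br 0 u = 0 := by
    intro u; have h := braddₗ 0 0 u; simp only [add_zero] at h
    exact (add_eq_right.mp h.symm)
  have brnegᵣ : ∀ u v, br u (-v) = - br u v := by
    intro u v; have h := hbrbilᵣ (-1) u v 0
    simpa [br0ᵣ] using h
  have brnegₗ : ∀ u v, br (-u) v = - br u v := by
    intro u v; have h := hbrbilₗ (-1) u 0 v
    simpa [br0ₗ] using h
  have brsubᵣ : ∀ u v w, br u (v - w) = br u v - br u w := by
    intro u v w; rw [sub_eq_add_neg, braddᵣ, brnegᵣ, sub_eq_add_neg]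
  have brsubₗ : ∀ u v w, br (u - v) w = br u w - br v w := by
    intro u v w; rw [sub_eq_add_neg, braddₗ, brnegₗ, sub_eq_add_neg]
  have ρ0 : ∀ c, ρ 0 c = 0 := by
    intro c; have h := hρadd 0 0 c; simp only [add_zero] at h
    exact (add_eq_right.mp h.symm)
  have ρneg : ∀ u c, ρ (-u) c = - ρ u c := by
    intro u c; have h := hρsmul (-1) u c; simpa using h
  have ρsub : ∀ u v c, ρ (u - v) c = ρ u c - ρ v c := by
    intro u v c; rw [sub_eq_add_neg, hρadd, ρneg, sub_eq_add_neg]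
  have brskew : ∀ u v, br u v = - br v u := by
    intro u v
    induction u using TensorProduct.induction_on with
    | zero => rw [br0ₗ, br0ᵣ, neg_zero]
    | tmul a f =>
      induction v using TensorProduct.induction_on with
      | zero => rw [br0ₗ, br0ᵣ, neg_zero]
      | tmul b g =>
        rw [hbr, hbr, hskew f g]
        simp only [TensorProduct.tmul_neg, mul_comm a b]
        abel
      | add x y hx hy =>
        rw [braddᵣ, braddₗ, hx, hy]; abel
    | add x y hx hy =>
      rw [braddᵣ, braddₗ, hx, hy]; abel
  have hsmt : ∀ (a x y : A), a • (x ⊗ₜ[k] y) = (a * x) ⊗ₜ[k] y := by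
    intro a x y; rw [TensorProduct.smul_tmul', smul_eq_mul]
  set ι : A →ₗ[k] A ⊗[k] A := TensorProduct.mk k A A 1 with hι
  have tι : ∀ (x y : A), x ⊗ₜ[k] y = x • ι y := by
    intro x y
    show x ⊗ₜ[k] y = x • ((1:A) ⊗ₜ[k] y)
    rw [TensorProduct.smul_tmul', smul_eq_mul, mul_one]
  -- ============ the canonical derivation on A ⊗ A ============
  set Df : A → (A →ₗ[k] A) := fun f =>
    { toFun := fun x => J f x + x * J 1 f
      map_add' := by intro x y; rw [haddᵣ]; ring
      map_smul' := by
        intro r x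
        simp only [RingHom.id_apply, hsmulᵣ, smul_add, smul_mul_assoc] } with hDf
  set DT : A → (A ⊗[k] A →ₗ[k] A ⊗[k] A) := fun f =>
    TensorProduct.map (Df f) LinearMap.id + TensorProduct.map LinearMap.id (Df f) with hDT
  have hDTtmul : ∀ f x y, DT f (x ⊗ₜ[k] y)
      = (J f x + x * J 1 f) ⊗ₜ[k] y + x ⊗ₜ[k] (J f y + y * J 1 f) := by
    intro f x y
    simp [hDT, hDf, TensorProduct.map_tmul]
  have DTleib : ∀ f m n, DT f (m*n) = DT f m * n + m * DT f n := by
    intro f m n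
    induction m using TensorProduct.induction_on with
    | zero => simp
    | tmul u v =>
      induction n using TensorProduct.induction_on with
      | zero => simp
      | tmul u' v' =>
        rw [Algebra.TensorProduct.tmul_mul_tmul, hDTtmul, hDTtmul, hDTtmul]
        rw [show J f (u*u') + (u*u') * J 1 f
            = u * (J f u' + u' * J 1 f) + u' * (J f u + u * J 1 f) from hφmul f u u',
          show J f (v*v') + (v*v') * J 1 f
            = v * (J f v' + v' * J 1 f) + v' * (J f v + v * J 1 f) from hφmul f v v']
        simp only [TensorProduct.add_tmul, TensorProduct.tmul_add, add_mul, mul_add,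
          Algebra.TensorProduct.tmul_mul_tmul]
        ring_nf
      | add x y hx hy =>
        rw [mul_add, map_add, hx, hy, map_add]; ring
    | add x y hx hy =>
      rw [add_mul, map_add, hx, hy, map_add]; ring
  have DTI : ∀ f, ∀ x ∈ KaehlerDifferential.ideal k A, DT f x ∈ KaehlerDifferential.ideal k A := by
    intro f x hx
    rw [← KaehlerDifferential.span_range_eq_ideal] at hx
    induction hx using Submodule.span_induction with
    | mem z hz =>
      obtain ⟨s, rfl⟩ := hz
      rw [map_sub, hDTtmul, hDTtmul, hφ1 f]
      simp only [TensorProduct.zero_tmul, TensorProduct.tmul_zero, zero_add, sub_zero, add_zero]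
      exact KaehlerDifferential.one_smul_sub_smul_one_mem_ideal k _
    | zero => simp
    | add x y hx hy ihx ihy => rw [map_add]; exact add_mem ihx ihy
    | smul r x hx ih =>
      rw [smul_eq_mul, DTleib]
      refine add_mem (Ideal.mul_mem_left _ _ ?_) (Ideal.mul_mem_left _ _ ih)
      · exact (le_of_eq (KaehlerDifferential.span_range_eq_ideal k A)) hx
  -- ============ the anchor on products, and part (2) ============
  set μ : A ⊗[k] A →ₐ[k] A := Algebra.TensorProduct.lmul' k with hμ
  have hμt : ∀ x y : A, μ (x ⊗ₜ[k] y) = x * y := fun x y => rfl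
  have hmem : ∀ m ∈ KaehlerDifferential.ideal k A, μ m = 0 := by
    intro m hm; exact hm
  have ρprod : ∀ c (m n : A ⊗[k] A), ρ (m * n) c
      = μ m * ρ n c + μ n * ρ m c + μ m * μ n * (c * J 1 1 - J 1 c) := by
    intro c m n
    induction m using TensorProduct.induction_on with
    | zero => simp [ρ0, zero_mul]
    | tmul u v =>
      induction n using TensorProduct.induction_on with
      | zero => simp [ρ0, mul_zero]
      | tmul u' v' =>
        rw [Algebra.TensorProduct.tmul_mul_tmul, hρ, hρ, hρ, hμt, hμt]
        linear_combination (u*u') * (hleib v v' c) + (u*u')*c*(hJ1mul v v')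
      | add x y ihx ihy =>
        rw [mul_add, hρadd, ihx, ihy, map_add, hρadd]; ring
    | add x y ihx ihy =>
      rw [add_mul, hρadd, ihx, ihy, map_add, hρadd]; ring
  have part2 : ∀ x ∈ (KaehlerDifferential.ideal k A ^ 2 : Ideal (A ⊗[k] A)), ∀ c : A, ρ x c = 0 := by
    intro x hx c
    rw [pow_two] at hx
    refine Submodule.mul_induction_on hx ?_ ?_
    · intro m hm n hn; rw [ρprod, hmem m hm, hmem n hn]; ring
    · intro x y hx hy; rw [hρadd, hx, hy, add_zero]
  -- ============ structural identity for the bracket, and part (1) ============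
  have hstar : ∀ (a f : A) (v : A ⊗[k] A),
      br (a ⊗ₜ[k] f) v
        = (a ⊗ₜ[k] (1:A)) * DT f v - ((a ⊗ₜ[k] (1:A)) * v) * ((1:A) ⊗ₜ[k] (J 1 f))
          - (ρ v a) ⊗ₜ[k] f := by
    intro a f v
    induction v using TensorProduct.induction_on with
    | zero => simp [br0ᵣ, ρ0]
    | tmul b g =>
      rw [hbr, hDTtmul, hρ]
      simp only [Algebra.TensorProduct.tmul_mul_tmul, mul_add, one_mul, mul_one,
        TensorProduct.tmul_add, TensorProduct.add_tmul]
      ring_nf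
    | add x y ihx ihy =>
      rw [braddᵣ, ihx, ihy, map_add, hρadd, TensorProduct.add_tmul]
      ring
  have part1 : ∀ u : A ⊗[k] A, ∀ x ∈ (KaehlerDifferential.ideal k A ^ 2 : Ideal (A ⊗[k] A)),
      br u x ∈ (KaehlerDifferential.ideal k A ^ 2 : Ideal (A ⊗[k] A)) := by
    have DTI2 : ∀ f, ∀ x ∈ (KaehlerDifferential.ideal k A ^ 2 : Ideal (A ⊗[k] A)),
        DT f x ∈ (KaehlerDifferential.ideal k A ^ 2 : Ideal (A ⊗[k] A)) := by
      intro f x hx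
      rw [pow_two] at hx ⊢
      refine Submodule.mul_induction_on hx ?_ ?_
      · intro m hm n hn
        rw [DTleib]
        exact add_mem (Submodule.mul_mem_mul (DTI f m hm) hn)
          (Submodule.mul_mem_mul hm (DTI f n hn))
      · intro x y hx hy; rw [map_add]; exact add_mem hx hy
    intro u x hx
    induction u using TensorProduct.induction_on with
    | zero => rw [br0ₗ]; exact zero_mem _
    | tmul a f =>
      rw [hstar, part2 x hx a, TensorProduct.zero_tmul, sub_zero]
      exact sub_mem (Ideal.mul_mem_left _ _ (DTI2 f x hx))
        (Ideal.mul_mem_right _ _ (Ideal.mul_mem_left _ _ hx))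
    | add y z ihy ihz => rw [braddₗ]; exact add_mem ihy ihz
  -- ============ exact Lie–Rinehart identities on A ⊗ A ============
  have ρsmulA : ∀ (a : A) (u : A ⊗[k] A) (c : A), ρ (a • u) c = a * ρ u c := by
    intro a u c
    induction u using TensorProduct.induction_on with
    | zero => rw [smul_zero, ρ0, mul_zero]
    | tmul b g => rw [hsmt, hρ, hρ]; ring
    | add x y ihx ihy => rw [smul_add, hρadd, ihx, ihy, hρadd]; ring
  have ρarg_add : ∀ (u : A ⊗[k] A) (x y : A), ρ u (x + y) = ρ u x + ρ u y := by
    intro u x y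
    induction u using TensorProduct.induction_on with
    | zero => rw [ρ0, ρ0, ρ0, add_zero]
    | tmul b g => rw [hρ, hρ, hρ, haddᵣ]; ring
    | add w z ihw ihz => rw [hρadd, hρadd, hρadd, ihw, ihz]; ring
  have ρder : ∀ (u : A ⊗[k] A) (x y : A), ρ u (x * y) = x * ρ u y + y * ρ u x := by
    intro u x y
    induction u using TensorProduct.induction_on with
    | zero => rw [ρ0, ρ0, ρ0]; ring
    | tmul b g => rw [hρ, hρ, hρ]; linear_combination b * hD g x y
    | add w z ihw ihz => rw [hρadd, hρadd, hρadd, ihw, ihz]; ring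
  have ρargz : ∀ u : A ⊗[k] A, ρ u 0 = 0 := by
    intro u
    induction u using TensorProduct.induction_on with
    | zero => exact ρ0 0
    | tmul b g => rw [hρ, hJ0r]; ring
    | add x y ihx ihy => rw [hρadd, ihx, ihy, add_zero]
  have ρargneg : ∀ (u : A ⊗[k] A) (x : A), ρ u (-x) = - ρ u x := by
    intro u x
    induction u using TensorProduct.induction_on with
    | zero => rw [ρ0, ρ0, neg_zero]
    | tmul b g => rw [hρ, hρ, hnegᵣ]; ring
    | add w z ihw ihz => rw [hρadd, hρadd, ihw, ihz]; ring
  have ρcomp : ∀ (u v : A ⊗[k] A) (c : A), ρ (br u v) c = ρ u (ρ v c) - ρ v (ρ u c) := by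
    intro u v c
    induction u using TensorProduct.induction_on with
    | zero => rw [br0ₗ, ρ0, ρ0, ρargz, sub_zero]
    | tmul a f =>
      induction v using TensorProduct.induction_on with
      | zero => rw [br0ᵣ, ρ0, ρ0, ρargz, zero_sub, neg_zero]
      | tmul b g =>
        rw [hbr, sub_eq_add_neg, hρadd, hρadd, ρneg]
        simp only [hρ]
        have h1 := hφJ f g c
        have h2 := hD f b (J g c + c * J 1 g)
        have h3 := hD g a (J f c + c * J 1 f)
        linear_combination (a*b) * h1 - a * h2 + b * h3
      | add x y ihx ihy =>
        rw [braddᵣ, hρadd, ihx, ihy, hρadd, hρadd, ρarg_add]; ring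
    | add x y ihx ihy =>
      rw [braddₗ, hρadd, ihx, ihy, hρadd, hρadd, ρarg_add]; ring
  have L1 : ∀ (a : A) (u v : A ⊗[k] A), br u (a • v) = a • br u v + (ρ u a) • v := by
    intro a u v
    induction u using TensorProduct.induction_on with
    | zero => simp only [br0ₗ, ρ0, smul_zero, zero_smul, add_zero]
    | tmul b g =>
      induction v using TensorProduct.induction_on with
      | zero => simp only [smul_zero, br0ᵣ, add_zero]
      | tmul c h =>
        rw [hsmt, hbr, hbr, hρ]
        simp only [smul_sub, smul_add, hsmt]
        have e := hD g a c
        rw [show J g (a*c) + (a*c) * J 1 g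
            = a * (J g c + c * J 1 g) + c * (J g a + a * J 1 g) from by linear_combination e]
        simp only [tι]
        module
      | add x y ihx ihy =>
        rw [smul_add, braddᵣ, ihx, ihy, braddᵣ, smul_add, smul_add]; ring
    | add x y ihx ihy =>
      rw [braddₗ, ihx, ihy, braddₗ, smul_add, hρadd, add_smul]; ring
  have L2 : ∀ (a : A) (u v : A ⊗[k] A), br (a • u) v = a • br u v - (ρ v a) • u := by
    intro a u v
    rw [brskew (a • u) v, L1, brskew v u]
    module
  have br11 : ∀ f g, br ((1:A) ⊗ₜ[k] f) ((1:A) ⊗ₜ[k] g) = (1:A) ⊗ₜ[k] J f g := by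
    intro f g
    rw [hbr, hφ1 f, hφ1 g]
    simp
  have Jpull : ∀ (a : A) (u v w : A ⊗[k] A),
      br (a • u) (br v w) + br v (br w (a • u)) + br w (br (a • u) v)
        = a • (br u (br v w) + br v (br w u) + br w (br u v)) := by
    intro a u v w
    have h1 : br (a • u) (br v w) = a • br u (br v w) - (ρ (br v w) a) • u := L2 a u (br v w)
    have h2 : br v (br w (a • u))
        = a • br v (br w u) + ((ρ w a) • br v u + (ρ v (ρ w a)) • u)
          + ((ρ v a) • br w u) := by
      rw [L1 a w u, braddᵣ, L1 a v (br w u), L1 (ρ w a) v u]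
      module
    have h3 : br w (br (a • u) v)
        = a • br w (br u v) + (ρ w a) • br u v
          + ((-(ρ v a)) • br w u + (- (ρ w (ρ v a))) • u) := by
      rw [L2 a u v, sub_eq_add_neg, ← neg_smul, braddᵣ, L1 a w (br u v),
        L1 (-(ρ v a)) w u, ρargneg]
    rw [h1, h2, h3, ρcomp v w a, brskew v u]
    module
  have cyc : ∀ u v w : A ⊗[k] A,
      br u (br v w) + br v (br w u) + br w (br u v)
        = br v (br w u) + br w (br u v) + br u (br v w) := by
    intro u v w; ring
  have JacZ : ∀ u v w : A ⊗[k] A,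
      br u (br v w) + br v (br w u) + br w (br u v) = 0 := by
    have base : ∀ f g h : A,
        br ((1:A) ⊗ₜ[k] f) (br ((1:A) ⊗ₜ[k] g) ((1:A) ⊗ₜ[k] h))
          + br ((1:A) ⊗ₜ[k] g) (br ((1:A) ⊗ₜ[k] h) ((1:A) ⊗ₜ[k] f))
          + br ((1:A) ⊗ₜ[k] h) (br ((1:A) ⊗ₜ[k] f) ((1:A) ⊗ₜ[k] g)) = 0 := by
      intro f g h
      rw [br11, br11, br11, br11, br11, br11, ← TensorProduct.tmul_add,
        ← TensorProduct.tmul_add, hjacobi, TensorProduct.tmul_zero]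
    have redtm : ∀ (a f : A), a ⊗ₜ[k] f = a • ((1:A) ⊗ₜ[k] f) := by
      intro a f; rw [hsmt, mul_one]
    intro u v w
    induction u using TensorProduct.induction_on with
    | zero => simp [br0ₗ, br0ᵣ]
    | tmul a f =>
      induction v using TensorProduct.induction_on with
      | zero => simp [br0ₗ, br0ᵣ]
      | tmul b g =>
        induction w using TensorProduct.induction_on with
        | zero => simp [br0ₗ, br0ᵣ]
        | tmul c h =>
          rw [redtm a f, redtm b g, redtm c h, Jpull, cyc, Jpull, cyc, Jpull,
            show br ((1:A) ⊗ₜ[k] h) (br ((1:A) ⊗ₜ[k] f) ((1:A) ⊗ₜ[k] g))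
              + br ((1:A) ⊗ₜ[k] f) (br ((1:A) ⊗ₜ[k] g) ((1:A) ⊗ₜ[k] h))
              + br ((1:A) ⊗ₜ[k] g) (br ((1:A) ⊗ₜ[k] h) ((1:A) ⊗ₜ[k] f))
              = 0 from by linear_combination base f g h]
          simp only [smul_zero]
        | add x y ihx ihy =>
          simp only [braddᵣ, braddₗ]
          linear_combination ihx + ihy
      | add x y ihx ihy =>
        simp only [braddᵣ, braddₗ]
        linear_combination ihx + ihy
    | add x y ihx ihy =>
      simp only [braddᵣ, braddₗ]
      linear_combination ihx + ihy
  -- ============ descent to the quotient ============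
  set I2 : Ideal (A ⊗[k] A) := KaehlerDifferential.ideal k A ^ 2 with hI2
  refine ⟨part1, part2, ?_⟩
  set π : A ⊗[k] A → (A ⊗[k] A) ⧸ I2 := ⇑(Ideal.Quotient.mk I2) with hπ
  have hsurj : Function.Surjective π := Ideal.Quotient.mk_surjective
  set sec : (A ⊗[k] A) ⧸ I2 → A ⊗[k] A := Function.surjInv hsurj with hsec
  have hsecπ : ∀ q, π (sec q) = q := fun q => Function.surjInv_eq hsurj q
  have πneg : ∀ z : A ⊗[k] A, π (-z) = - π z := fun z => RingHom.map_neg (Ideal.Quotient.mk I2) z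
  have πadd : ∀ x y : A ⊗[k] A, π (x + y) = π x + π y :=
    fun x y => RingHom.map_add (Ideal.Quotient.mk I2) x y
  have πzero : π 0 = 0 := RingHom.map_zero (Ideal.Quotient.mk I2)
  have πsm : ∀ (r : A) (z : A ⊗[k] A), π (r • z) = r • π z :=
    fun r z => Submodule.Quotient.mk_smul I2 r z
  have πeq : ∀ u v : A ⊗[k] A, u - v ∈ I2 → π u = π v := by
    intro u v h; exact Ideal.Quotient.eq.mpr h
  have brW : ∀ u u' v v' : A ⊗[k] A, π u = π u' → π v = π v' → π (br u v) = π (br u' v') := by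
    intro u u' v v' h1 h2
    apply πeq
    have h1' : u - u' ∈ I2 := Ideal.Quotient.eq.mp h1
    have h2' : v - v' ∈ I2 := Ideal.Quotient.eq.mp h2
    have key : br u v - br u' v' = br (u - u') v + br u' (v - v') := by
      rw [brsubₗ, brsubᵣ]; ring
    rw [key]
    refine add_mem ?_ (part1 u' _ h2')
    have : br (u - u') v = - br v (u - u') := brskew _ _
    rw [this]
    exact neg_mem (part1 v _ h1')
  have ρW : ∀ u u' : A ⊗[k] A, π u = π u' → ∀ c, ρ u c = ρ u' c := by
    intro u u' h c
    have h' : u - u' ∈ I2 := Ideal.Quotient.eq.mp h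
    have := part2 _ h' c
    rw [ρsub, sub_eq_zero] at this
    exact this
  refine ⟨fun q r => π (br (sec q) (sec r)), fun q => ρ (sec q),
    ?_, ?_, ?_, ?_, ?_, ?_, ?_, ?_, ?_, ?_, ?_⟩
  · -- descent of bracket
    dsimp only
    intro u v
    exact brW _ _ _ _ (hsecπ (π u)) (hsecπ (π v))
  · -- descent of anchor
    dsimp only
    intro u c
    exact ρW _ _ (hsecπ (π u)) c
  · -- jets bracket
    dsimp only
    intro f g
    have h := brW (sec (π ((1:A) ⊗ₜ[k] f))) ((1:A) ⊗ₜ[k] f)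
      (sec (π ((1:A) ⊗ₜ[k] g))) ((1:A) ⊗ₜ[k] g) (hsecπ _) (hsecπ _)
    rw [h, br11]
  · -- jets anchor
    dsimp only
    intro a c
    rw [ρW _ ((1:A) ⊗ₜ[k] a) (hsecπ _) c, hρ, one_mul]
  · -- antisymmetry
    dsimp only
    intro u v
    obtain ⟨x, rfl⟩ := hsurj u
    obtain ⟨y, rfl⟩ := hsurj v
    rw [brW _ x _ y (hsecπ _) (hsecπ _), brW _ y _ x (hsecπ _) (hsecπ _), brskew x y, πneg]
  · -- Jacobi
    dsimp only
    intro u v w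
    obtain ⟨x, rfl⟩ := hsurj u
    obtain ⟨y, rfl⟩ := hsurj v
    obtain ⟨z, rfl⟩ := hsurj w
    rw [brW _ y _ z (hsecπ _) (hsecπ _), brW _ x _ (br y z) (hsecπ _) (hsecπ _),
      brW _ z _ x (hsecπ _) (hsecπ _), brW _ y _ (br z x) (hsecπ _) (hsecπ _),
      brW _ x _ y (hsecπ _) (hsecπ _), brW _ z _ (br x y) (hsecπ _) (hsecπ _),
      ← πadd, ← πadd, JacZ, πzero]
  · -- anchor A-linearity
    dsimp only
    intro a u c
    obtain ⟨x, rfl⟩ := hsurj u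
    rw [← πsm a x, ρW _ (a • x) (hsecπ _) c, ρW _ x (hsecπ _) c, ρsmulA]
  · -- anchor additivity
    dsimp only
    intro u v c
    obtain ⟨x, rfl⟩ := hsurj u
    obtain ⟨y, rfl⟩ := hsurj v
    rw [show π x + π y = π (x + y) from (πadd x y).symm,
      ρW _ (x + y) (hsecπ _) c, ρW _ x (hsecπ _) c, ρW _ y (hsecπ _) c, hρadd]
  · -- anchor derivation
    dsimp only
    intro u x y
    obtain ⟨w, rfl⟩ := hsurj u
    rw [ρW _ w (hsecπ _), ρW _ w (hsecπ _), ρW _ w (hsecπ _), ρder]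
  · -- anchor of bracket
    dsimp only
    intro u v c
    obtain ⟨x, rfl⟩ := hsurj u
    obtain ⟨y, rfl⟩ := hsurj v
    rw [brW _ x _ y (hsecπ _) (hsecπ _), ρW _ (br x y) (hsecπ _) c,
      ρW _ x (hsecπ _), ρW _ y (hsecπ _), ρW _ x (hsecπ _), ρW _ y (hsecπ _), ρcomp]
  · -- Leibniz
    dsimp only
    intro u a v
    obtain ⟨x, rfl⟩ := hsurj u
    obtain ⟨y, rfl⟩ := hsurj v
    rw [← πsm a y, brW _ x _ (a • y) (hsecπ _) (hsecπ _), brW _ x _ y (hsecπ _) (hsecπ _),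
      ρW _ x (hsecπ _), L1, πadd, πsm a (br x y), πsm (ρ x a) y]
end

section
/- Let (A, {•,•}_J) be a Jacobi algebra over a field k and (A, 𝒥¹(A)) the canonical Lie–Rinehart algebra with anchor ρ(j¹(a)) = Φ_a and bracket [j¹(f), j¹(g)] = j¹({f,g}_J). The map φ : 𝒥¹(A) → A, a·j¹(b) ↦ {a,b}_J, is a right (A, 𝒥¹(A))-connection character on A, i.e., φ(c·a·j¹(b)) = c·φ(a·j¹(b)) − ρ(a·j¹(b))(c). -/
open TensorProduct

set_option maxHeartbeats 2000000 in
/-- For a Jacobi algebra `(A, J)` over a field `k`, the map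
`φ : 𝒥¹(A) → A`, `a • j¹ b ↦ J a b`, is a right `(A, 𝒥¹(A))`-connection
character on `A`: `φ (c • (a • j¹ b)) = c * φ (a • j¹ b) - ρ (a • j¹ b) c`,
where `ρ (a • j¹ b) c = a * (J b c + c * J 1 b)` is the anchor. -/
theorem jacobi_one_jet_connection_character
    (k A : Type*) [Field k] [CommRing A] [Algebra k A]
    (J : A → A → A)
    (hbilₗ : ∀ (r : k) (a a' b : A), J (r • a + a') b = r • J a b + J a' b)
    (hbilᵣ : ∀ (r : k) (a b b' : A), J a (r • b + b') = r • J a b + J a b')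
    (hskew : ∀ a b, J a b = - J b a)
    (hjacobi : ∀ a b c, J a (J b c) + J b (J c a) + J c (J a b) = 0)
    (hleib : ∀ a b c, J (a * b) c = a * J b c + b * J a c - a * b * J 1 c) :
    letI Q := (A ⊗[k] A) ⧸ (KaehlerDifferential.ideal k A ^ 2)
    letI π : A ⊗[k] A → Q := Ideal.Quotient.mk (KaehlerDifferential.ideal k A ^ 2)
    letI j1 : A → Q := fun a => π ((1 : A) ⊗ₜ[k] a)
    ∃ φ : Q →ₗ[k] A,
      (∀ a b : A, φ (a • j1 b) = J a b) ∧
      -- the right connection-character law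
      (∀ a b c : A,
        φ (c • (a • j1 b)) = c * φ (a • j1 b) - a * (J b c + c * J 1 b)) := by
  have hzₗ : ∀ b, J 0 b = 0 := fun b => by
    have h := hbilₗ (1:k) 0 0 b; simp at h; exact h
  have hzᵣ : ∀ a, J a 0 = 0 := fun a => by
    have h := hbilᵣ (1:k) a 0 0; simp at h; exact h
  have haddₗ : ∀ a a' b, J (a + a') b = J a b + J a' b := fun a a' b => by
    have h := hbilₗ (1:k) a a' b; simpa using h
  have haddᵣ : ∀ a b b', J a (b + b') = J a b + J a b' := fun a b b' => by
    have h := hbilᵣ (1:k) a b b'; simpa using h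
  have hsmulₗ : ∀ (r : k) a b, J (r • a) b = r • J a b := fun r a b => by
    have h := hbilₗ r a 0 b; simpa [hzₗ] using h
  have hsmulᵣ : ∀ (r : k) a b, J a (r • b) = r • J a b := fun r a b => by
    have h := hbilᵣ r a b 0; simpa [hzᵣ] using h
  -- Leibniz in the second argument
  have hleib₂ : ∀ x y z, J x (y * z) = y * J x z + z * J x y + y * z * J 1 x := by
    intro x y z
    rw [hskew x (y * z), hleib y z x, hskew z x, hskew y x, hskew 1 x]
    ring
  -- the bilinear lift
  let Jb : A →ₗ[k] A →ₗ[k] A := LinearMap.mk₂ k J haddₗ hsmulₗ haddᵣ hsmulᵣ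
  let Jl : A ⊗[k] A →ₗ[k] A := TensorProduct.lift Jb
  have hJl : ∀ a b : A, Jl (a ⊗ₜ[k] b) = J a b := fun a b => rfl
  -- the key scalar identity
  have key : ∀ a b c d : A,
      J (a * c) (b * d) - J a (b * (c * d)) - J c (a * b * d) + J 1 (a * b * (c * d)) = 0 := by
    intro a b c d
    rw [hleib a c (b * d), hleib₂ c b d, hleib₂ a b d, hleib₂ 1 b d,
        hleib₂ a b (c * d), hleib₂ a c d,
        hleib₂ c (a * b) d, hleib₂ c a b,
        hleib₂ 1 (a * b) (c * d), hleib₂ 1 a b, hleib₂ 1 c d]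
    linear_combination (-(b*d)) * hskew a c + (a*b*c*d) * hskew 1 1
  -- spanning set of the ideal
  set S : Submodule k (A ⊗[k] A) := Submodule.span k
    (Set.range fun p : A × A => p.1 ⊗ₜ[k] p.2 - (1 : A) ⊗ₜ[k] (p.1 * p.2)) with hS
  have hmem : ∀ x ∈ KaehlerDifferential.ideal k A, x ∈ S := by
    intro x hx
    have hx0 : (Algebra.TensorProduct.lmul' k : A ⊗[k] A →ₐ[k] A) x = 0 := hx
    have hgen : ∀ y : A ⊗[k] A,
        y - (1 : A) ⊗ₜ[k] ((Algebra.TensorProduct.lmul' k : A ⊗[k] A →ₐ[k] A) y) ∈ S := by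
      intro y
      induction y using TensorProduct.induction_on with
      | zero => simp
      | tmul a b =>
        rw [Algebra.TensorProduct.lmul'_apply_tmul]
        exact Submodule.subset_span ⟨(a, b), rfl⟩
      | add u v hu hv =>
        rw [map_add, TensorProduct.tmul_add]
        have h := Submodule.add_mem S hu hv
        convert h using 1
        abel
    have := hgen x
    rwa [hx0, TensorProduct.tmul_zero, sub_zero] at this
  -- Jl vanishes on the square of the ideal
  have hvanish : ∀ x ∈ (KaehlerDifferential.ideal k A) ^ 2, Jl x = 0 := by
    intro x hx
    rw [pow_two] at hx
    refine Submodule.mul_induction_on hx ?_ ?_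
    · intro m hm n hn
      have hm' := hmem m hm
      have hn' := hmem n hn
      clear hm hn
      induction hm' using Submodule.span_induction with
      | mem m hmm =>
        obtain ⟨⟨a, b⟩, rfl⟩ := hmm
        induction hn' using Submodule.span_induction with
        | mem n hnn =>
          obtain ⟨⟨c, d⟩, rfl⟩ := hnn
          have expand : (a ⊗ₜ[k] b - (1:A) ⊗ₜ[k] (a * b)) * (c ⊗ₜ[k] d - (1:A) ⊗ₜ[k] (c * d))
              = (a * c) ⊗ₜ[k] (b * d) - a ⊗ₜ[k] (b * (c * d))
                - c ⊗ₜ[k] (a * b * d) + (1:A) ⊗ₜ[k] (a * b * (c * d)) := by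
            simp only [sub_mul, mul_sub, Algebra.TensorProduct.tmul_mul_tmul]
            ring_nf
          rw [expand, map_add, map_sub, map_sub, hJl, hJl, hJl, hJl]
          linear_combination key a b c d
        | zero => simp
        | add u v hu hv ihu ihv => rw [mul_add, map_add, ihu, ihv, add_zero]
        | smul r u hu ihu =>
          rw [mul_smul_comm, map_smul, ihu, smul_zero]
      | zero => simp
      | add u v hu hv ihu ihv => rw [add_mul, map_add, ihu, ihv, add_zero]
      | smul r u hu ihu => rw [smul_mul_assoc, map_smul, ihu, smul_zero]
    · intro u v hu hv
      rw [map_add, hu, hv, add_zero]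
  -- descend to the quotient
  have hle : (KaehlerDifferential.ideal k A ^ 2).restrictScalars k ≤ LinearMap.ker Jl :=
    fun x hx => hvanish x hx
  refine ⟨(Submodule.liftQ ((KaehlerDifferential.ideal k A ^ 2).restrictScalars k) Jl hle).comp
      (Submodule.Quotient.restrictScalarsEquiv k
        ((KaehlerDifferential.ideal k A ^ 2 : Ideal (A ⊗[k] A)) :
          Submodule (A ⊗[k] A) (A ⊗[k] A))).symm.toLinearMap, ?_, ?_⟩
  · intro a b
    have ht : a • ((1:A) ⊗ₜ[k] b) = a ⊗ₜ[k] b := by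
      rw [smul_tmul', smul_eq_mul, mul_one]
    have h1 : (a • (Ideal.Quotient.mk (KaehlerDifferential.ideal k A ^ 2) ((1:A) ⊗ₜ[k] b))) =
        Ideal.Quotient.mk (KaehlerDifferential.ideal k A ^ 2) (a ⊗ₜ[k] b) := by
      rw [← ht]; exact (Submodule.Quotient.mk_smul _ a _).symm
    rw [h1]
    exact hJl a b
  · intro a b c
    have key2 : ∀ x y : A,
        ((Submodule.liftQ ((KaehlerDifferential.ideal k A ^ 2).restrictScalars k) Jl hle).comp
          (Submodule.Quotient.restrictScalarsEquiv k
            ((KaehlerDifferential.ideal k A ^ 2 : Ideal (A ⊗[k] A)) :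
              Submodule (A ⊗[k] A) (A ⊗[k] A))).symm.toLinearMap)
          (x • (Ideal.Quotient.mk (KaehlerDifferential.ideal k A ^ 2) ((1:A) ⊗ₜ[k] y)))
          = J x y := by
      intro x y
      have ht : x • ((1:A) ⊗ₜ[k] y) = x ⊗ₜ[k] y := by
        rw [smul_tmul', smul_eq_mul, mul_one]
      have h1 : (x • (Ideal.Quotient.mk (KaehlerDifferential.ideal k A ^ 2) ((1:A) ⊗ₜ[k] y))) =
          Ideal.Quotient.mk (KaehlerDifferential.ideal k A ^ 2) (x ⊗ₜ[k] y) := by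
        rw [← ht]; exact (Submodule.Quotient.mk_smul _ x _).symm
      rw [h1]; exact hJl x y
    rw [smul_smul, key2, key2]
    linear_combination hleib c a b + a * hskew c b
end

section
/- Let (A, {•,•}_J) be a Jacobi algebra. For all a, b ∈ A, the following curvature identity holds: −{a, {1,b}_J}_J − {1,a}_J·{1,b}_J + {b, {1,a}_J}_J + {1,b}_J·{1,a}_J + {1, {a,b}_J}_J = 0. Consequently the right (A, 𝒥¹(A))-connection on A given by the character φ(a·j¹(b)) = {a,b}_J is flat. -/
/-- In a Jacobi algebra `(A, J)` the curvature identity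
`-{a,{1,b}} - {1,a}·{1,b} + {b,{1,a}} + {1,b}·{1,a} + {1,{a,b}} = 0` holds;
consequently the right `(A, 𝒥¹(A))`-connection on `A` with character
`φ (a • j¹ b) = J a b` is flat: the curvature
`C(j¹ a, j¹ b) = -Φ_a (φ (j¹ b)) + Φ_b (φ (j¹ a)) + φ ([j¹ a, j¹ b])`
vanishes, where `Φ_a c = J a c + c * J 1 a` and `φ (j¹ b) = J 1 b`. -/
theorem jacobi_one_jet_connection_flat
    (R A : Type*) [CommRing R] [CommRing A] [Algebra R A]
    (J : A → A → A)
    (hbilₗ : ∀ (r : R) (a a' b : A), J (r • a + a') b = r • J a b + J a' b)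
    (hbilᵣ : ∀ (r : R) (a b b' : A), J a (r • b + b') = r • J a b + J a b')
    (hskew : ∀ a b, J a b = - J b a)
    (hjacobi : ∀ a b c, J a (J b c) + J b (J c a) + J c (J a b) = 0)
    (hleib : ∀ a b c, J (a * b) c = a * J b c + b * J a c - a * b * J 1 c) :
    -- the displayed curvature identity
    (∀ a b : A,
        - J a (J 1 b) - J 1 a * J 1 b + J b (J 1 a) + J 1 b * J 1 a
          + J 1 (J a b) = 0) ∧
    -- restated: the curvature of the connection character vanishes
    (∀ a b : A,
        - (J a (J 1 b) + J 1 b * J 1 a)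
          + (J b (J 1 a) + J 1 a * J 1 b)
          + J 1 (J a b) = 0) := by
  have hzero : ∀ a : A, J a 0 = 0 := by
    intro a
    have h := hbilᵣ (1 : R) a 0 0
    simpa using h.symm
  have hneg : ∀ a x : A, J a (-x) = - J a x := by
    intro a x
    have h := hbilᵣ (-1 : R) a x 0
    simpa [hzero] using h
  have key : ∀ a b : A, - J a (J 1 b) + J b (J 1 a) + J 1 (J a b) = 0 := by
    intro a b
    have h := hjacobi 1 a b
    have h2 : J a (J b 1) = - J a (J 1 b) := by
      rw [hskew b 1, hneg]
    linear_combination h - h2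
  constructor
  · intro a b
    have := key a b
    linear_combination this
  · intro a b
    have := key a b
    linear_combination this
end

section
/- Let (A, L) be a Lie–Rinehart algebra over R and h ∈ A. Let μ_h : L → L, ζ ↦ h·ζ, M = hL, K = Ker(μ_h). Then M admits a Lie–Rinehart structure with bracket [h·ζ, h·γ]_M := h·[ζ,γ]_L and anchor ρ_M(h·ζ) := ρ_L(ζ) (making μ_h a morphism of Lie–Rinehart algebras) if and only if (1) ρ_L(ξ) = 0 for all ξ ∈ K, and (2) h·[ξ, ζ]_L = 0 for all ξ ∈ K and ζ ∈ L. -/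
/-- Let `(A, L)` be a Lie–Rinehart algebra over `R` and `h ∈ A`.
With `M = hL` (the range of `ζ ↦ h • ζ`) and `K = Ker (ζ ↦ h • ζ)`, the pair
`(A, M)` admits a Lie–Rinehart structure with `[h•ζ, h•γ]_M = h • [ζ,γ]_L` and
`ρ_M (h•ζ) = ρ_L ζ` (so that `μ_h` is a morphism) if and only if
(1) `ρ_L ξ = 0` for all `ξ ∈ K`, and (2) `h • [ξ, ζ]_L = 0` for `ξ ∈ K`, `ζ ∈ L`. -/
theorem quotient_lie_rinehart_iff
    (R A L : Type*) [CommRing R] [CommRing A] [Algebra R A]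
    [AddCommGroup L] [Module R L] [Module A L] [IsScalarTower R A L]
    (br : L → L → L) (ρ : L → A → A)
    (hbrₗ : ∀ (r : R) (u u' v : L), br (r • u + u') v = r • br u v + br u' v)
    (hskew : ∀ u v, br u v = - br v u)
    (hjacobi : ∀ u v w, br u (br v w) + br v (br w u) + br w (br u v) = 0)
    (hρlin : ∀ (u : L) (r : R) (x y : A), ρ u (r • x + y) = r • ρ u x + ρ u y)
    (hρder : ∀ (u : L) (x y : A), ρ u (x * y) = x * ρ u y + y * ρ u x)
    (hρA : ∀ (a : A) (u : L) (x : A), ρ (a • u) x = a * ρ u x)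
    (hρadd : ∀ (u v : L) (x : A), ρ (u + v) x = ρ u x + ρ v x)
    (hρlie : ∀ (u v : L) (x : A), ρ (br u v) x = ρ u (ρ v x) - ρ v (ρ u x))
    (hleib : ∀ (u : L) (a : A) (v : L), br u (a • v) = a • br u v + ρ u a • v)
    (h : A) :
    (letI M : Submodule A L := LinearMap.range (LinearMap.lsmul A L h)
     ∃ (brM : M → M → M) (ρM : M → A → A),
      -- the defining formulas (in particular `μ_h` is a morphism)
      (∀ ζ γ : L,
        brM ⟨h • ζ, ⟨ζ, rfl⟩⟩ ⟨h • γ, ⟨γ, rfl⟩⟩ = ⟨h • br ζ γ, ⟨br ζ γ, rfl⟩⟩) ∧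
      (∀ (ζ : L) (c : A), ρM ⟨h • ζ, ⟨ζ, rfl⟩⟩ c = ρ ζ c) ∧
      -- Lie–Rinehart axioms for `(A, M)`
      (∀ u v : M, brM u v = - brM v u) ∧
      (∀ u v w : M, brM u (brM v w) + brM v (brM w u) + brM w (brM u v) = 0) ∧
      (∀ (u : M) (r : R) (x y : A), ρM u (r • x + y) = r • ρM u x + ρM u y) ∧
      (∀ (u : M) (x y : A), ρM u (x * y) = x * ρM u y + y * ρM u x) ∧
      (∀ (a : A) (u : M) (x : A), ρM (a • u) x = a * ρM u x) ∧
      (∀ (u v : M) (x : A), ρM (u + v) x = ρM u x + ρM v x) ∧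
      (∀ (u v : M) (x : A), ρM (brM u v) x = ρM u (ρM v x) - ρM v (ρM u x)) ∧
      (∀ (u : M) (a : A) (v : M), brM u (a • v) = a • brM u v + ρM u a • v))
    ↔ ((∀ ξ : L, h • ξ = 0 → ∀ c : A, ρ ξ c = 0) ∧
       (∀ ξ : L, h • ξ = 0 → ∀ ζ : L, h • br ξ ζ = 0)) := by
  -- helper facts
  have hρ0 : ∀ c : A, ρ 0 c = 0 := by
    intro c
    have := hρA 0 0 c
    simpa using this
  have hbr_add : ∀ u u' v : L, br (u + u') v = br u v + br u' v := by
    intro u u' v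
    have := hbrₗ 1 u u' v
    simpa using this
  have hbr0 : ∀ v : L, br 0 v = 0 := by
    intro v
    have := hbr_add 0 0 v
    simpa using this.symm
  have hbr_neg : ∀ u v : L, br (-u) v = - br u v := by
    intro u v
    have := hbrₗ (-1 : R) u 0 v
    simpa [hbr0] using this
  have hbr_sub : ∀ u u' v : L, br (u - u') v = br u v - br u' v := by
    intro u u' v
    rw [sub_eq_add_neg, hbr_add, hbr_neg, sub_eq_add_neg]
  have hρ_sub : ∀ u u' : L, ∀ c : A, ρ (u - u') c = ρ u c - ρ u' c := by
    intro u u' c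
    have h1 := hρadd (u - u') u' c
    rw [sub_add_cancel] at h1
    linear_combination -h1
  constructor
  · rintro ⟨brM, ρM, hf1, hf2, hsk, hjac, hl1, hl2, hA, hadd2, hlie, hlb⟩
    constructor
    · intro ξ hξ c
      have e : ρ ξ c = ρ 0 c := by
        rw [← hf2 ξ c, ← hf2 0 c]
        congr 1
        exact Subtype.ext (show h • ξ = h • (0 : L) by rw [hξ, smul_zero])
      rw [e, hρ0]
    · intro ξ hξ ζ
      have e : (⟨h • br ξ ζ, ⟨br ξ ζ, rfl⟩⟩ :
          LinearMap.range (LinearMap.lsmul A L h)) = ⟨h • br 0 ζ, ⟨br 0 ζ, rfl⟩⟩ := by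
        rw [← hf1 ξ ζ, ← hf1 0 ζ]
        congr 1
        exact Subtype.ext (show h • ξ = h • (0 : L) by rw [hξ, smul_zero])
      have e2 := congrArg Subtype.val e
      simpa [hbr0] using e2
  · rintro ⟨c1, c2⟩
    set M : Submodule A L := LinearMap.range (LinearMap.lsmul A L h) with hMdef
    have hex : ∀ u : M, ∃ y : L, h • y = (u : L) := by
      intro u
      obtain ⟨y, hy⟩ := LinearMap.mem_range.mp u.2
      exact ⟨y, by simpa using hy⟩
    set lift : M → L := fun u => (hex u).choose with hliftdef
    have hlift : ∀ u : M, h • lift u = (u : L) := fun u => (hex u).choose_spec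
    -- well-definedness lemmas
    have keyρ : ∀ ζ ζ' : L, h • ζ = h • ζ' → ∀ c : A, ρ ζ c = ρ ζ' c := by
      intro ζ ζ' hzz c
      have h0 : h • (ζ - ζ') = 0 := by rw [smul_sub, hzz, sub_self]
      have hz := c1 _ h0 c
      rw [hρ_sub] at hz
      linear_combination hz
    have keybr : ∀ ζ ζ' γ γ' : L, h • ζ = h • ζ' → h • γ = h • γ' →
        h • br ζ γ = h • br ζ' γ' := by
      intro ζ ζ' γ γ' hzz hgg
      have h0 : h • (ζ - ζ') = 0 := by rw [smul_sub, hzz, sub_self]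
      have h0' : h • (γ - γ') = 0 := by rw [smul_sub, hgg, sub_self]
      have e1 : h • br ζ γ = h • br ζ' γ := by
        have hz := c2 _ h0 γ
        rw [hbr_sub, smul_sub, sub_eq_zero] at hz
        exact hz
      have e2 : h • br ζ' γ = h • br ζ' γ' := by
        have hz := c2 _ h0' ζ'
        rw [hbr_sub, smul_sub, sub_eq_zero] at hz
        rw [hskew ζ' γ, hskew ζ' γ', smul_neg, smul_neg, hz]
      rw [e1, e2]
    refine ⟨fun u v => ⟨h • br (lift u) (lift v), ⟨br (lift u) (lift v), rfl⟩⟩,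
      fun u c => ρ (lift u) c, ?_, ?_, ?_, ?_, ?_, ?_, ?_, ?_, ?_, ?_⟩
    · intro ζ γ
      exact Subtype.ext (keybr _ _ _ _ (by rw [hlift]) (by rw [hlift]))
    · intro ζ c
      exact keyρ _ _ (by rw [hlift]) c
    · intro u v
      apply Subtype.ext
      show h • br (lift u) (lift v) = -(h • br (lift v) (lift u))
      rw [hskew (lift u) (lift v), smul_neg]
    · intro u v w
      have E : ∀ p q s : M, h • br (lift p)
          (lift ⟨h • br (lift q) (lift s), ⟨br (lift q) (lift s), rfl⟩⟩)
          = h • br (lift p) (br (lift q) (lift s)) := by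
        intro p q s
        exact keybr _ _ _ _ rfl (by rw [hlift])
      apply Subtype.ext
      simp only [Submodule.coe_add, ZeroMemClass.coe_zero]
      rw [E u v w, E v w u, E w u v, ← smul_add, ← smul_add, hjacobi, smul_zero]
    · intro u r x y
      exact hρlin (lift u) r x y
    · intro u x y
      exact hρder (lift u) x y
    · intro a u x
      show ρ (lift (a • u)) x = a * ρ (lift u) x
      have e : ρ (lift (a • u)) x = ρ (a • lift u) x := by
        apply keyρ
        rw [hlift]
        show ((a • u : M) : L) = _
        rw [Submodule.coe_smul, ← hlift u, smul_smul, smul_smul, mul_comm]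
      rw [e, hρA]
    · intro u v x
      show ρ (lift (u + v)) x = ρ (lift u) x + ρ (lift v) x
      have e : ρ (lift (u + v)) x = ρ (lift u + lift v) x := by
        apply keyρ
        rw [hlift]
        show ((u + v : M) : L) = _
        rw [Submodule.coe_add, ← hlift u, ← hlift v, smul_add]
      rw [e, hρadd]
    · intro u v x
      show ρ (lift ⟨h • br (lift u) (lift v), ⟨br (lift u) (lift v), rfl⟩⟩) x
        = ρ (lift u) (ρ (lift v) x) - ρ (lift v) (ρ (lift u) x)
      have e : ρ (lift ⟨h • br (lift u) (lift v), ⟨br (lift u) (lift v), rfl⟩⟩) x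
          = ρ (br (lift u) (lift v)) x := by
        apply keyρ
        rw [hlift]
      rw [e, hρlie]
    · intro u a v
      apply Subtype.ext
      have e1 : h • br (lift u) (lift (a • v)) = h • br (lift u) (a • lift v) := by
        apply keybr _ _ _ _ rfl
        rw [hlift]
        show ((a • v : M) : L) = _
        rw [Submodule.coe_smul, ← hlift v, smul_smul, smul_smul, mul_comm]
      show h • br (lift u) (lift (a • v)) =
        a • (h • br (lift u) (lift v)) + ρ (lift u) a • (v : L)
      rw [e1, hleib, smul_add, ← hlift v]
      simp only [smul_smul]
      rw [mul_comm h a, mul_comm h (ρ (lift u) a)]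
end

section
/- Let (A, L) be a Lie–Rinehart algebra over R, h ∈ A, M = hL, K = Ker(ζ ↦ h·ζ), with (A, M) carrying the quotient Lie–Rinehart structure (bracket [h·ζ, h·γ]_M = h·[ζ,γ]_L, anchor ρ_M(h·ζ) = ρ_L(ζ)). If there exist ζ ∈ L and a ∈ A with a·ζ ∈ K such that no b ∈ A satisfies a·b = ρ_L(ζ)(a), then there exists no right (A, M)-connection on A. -/
/-- Let `(A, L)` be a Lie–Rinehart algebra over `R`, `h ∈ A`,
`M = hL` with the quotient Lie–Rinehart structure (`ρ_M (h•ζ) = ρ_L ζ`).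
If there are `ζ ∈ L` and `a ∈ A` with `a • ζ ∈ K` (i.e. `h • (a • ζ) = 0`)
such that no `b ∈ A` satisfies `a * b = ρ_L ζ a`, then there is no right
`(A, M)`-connection (character) on `A`. -/
theorem no_right_connection_of_obstruction
    (R A L : Type*) [CommRing R] [CommRing A] [Algebra R A]
    [AddCommGroup L] [Module R L] [Module A L] [IsScalarTower R A L]
    (br : L → L → L) (ρ : L → A → A)
    (hbrₗ : ∀ (r : R) (u u' v : L), br (r • u + u') v = r • br u v + br u' v)
    (hskew : ∀ u v, br u v = - br v u)
    (hjacobi : ∀ u v w, br u (br v w) + br v (br w u) + br w (br u v) = 0)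
    (hρlin : ∀ (u : L) (r : R) (x y : A), ρ u (r • x + y) = r • ρ u x + ρ u y)
    (hρder : ∀ (u : L) (x y : A), ρ u (x * y) = x * ρ u y + y * ρ u x)
    (hρA : ∀ (a : A) (u : L) (x : A), ρ (a • u) x = a * ρ u x)
    (hρadd : ∀ (u v : L) (x : A), ρ (u + v) x = ρ u x + ρ v x)
    (hρlie : ∀ (u v : L) (x : A), ρ (br u v) x = ρ u (ρ v x) - ρ v (ρ u x))
    (hleib : ∀ (u : L) (a : A) (v : L), br u (a • v) = a • br u v + ρ u a • v)
    (h : A)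
    -- hypotheses of the quotient construction
    (hK1 : ∀ ξ : L, h • ξ = 0 → ∀ c : A, ρ ξ c = 0)
    (hK2 : ∀ ξ : L, h • ξ = 0 → ∀ ζ : L, h • br ξ ζ = 0)
    -- the obstruction
    (ζ : L) (a : A) (hker : h • (a • ζ) = 0)
    (hno : ¬ ∃ b : A, a * b = ρ ζ a) :
    letI M : Submodule A L := LinearMap.range (LinearMap.lsmul A L h)
    ¬ ∃ δ : M → A,
        (∀ (r : R) (u v : M), δ (r • u + v) = r • δ u + δ v) ∧
        -- the right connection-character law `δ (c • θ) = c * δ θ - ρ_M θ c`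
        (∀ (c : A) (ξ : L),
          δ (c • (⟨h • ξ, ⟨ξ, rfl⟩⟩ : M)) = c * δ ⟨h • ξ, ⟨ξ, rfl⟩⟩ - ρ ξ c) := by
  rintro ⟨δ, -, hlaw⟩
  -- ρ 0 x = 0
  have hρ0 : ∀ x : A, ρ (0 : L) x = 0 := by
    intro x
    have := hρA 0 0 x
    simpa using this
  -- δ 0 = 0, using the connection law with c = 0, ξ = 0
  have hδ0 : δ 0 = 0 := by
    have := hlaw 0 0
    have h0 : (0 : A) • (⟨h • (0 : L), ⟨0, rfl⟩⟩ : LinearMap.range (LinearMap.lsmul A L h)) = 0 := by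
      simp
    rw [h0] at this
    simpa [hρ0] using this
  -- a • ⟨h • ζ⟩ = 0 in M
  have key : (a • (⟨h • ζ, ⟨ζ, rfl⟩⟩ : LinearMap.range (LinearMap.lsmul A L h))) = 0 := by
    apply Subtype.ext
    show a • (h • ζ) = 0
    rw [smul_comm]
    exact hker
  have := hlaw a ζ
  rw [key, hδ0] at this
  exact hno ⟨δ ⟨h • ζ, ⟨ζ, rfl⟩⟩, by linear_combination -this⟩
end

section
/- Let (A, {•,•}_J) be a Jacobi algebra over a field k, h ∈ A with r·{•,•}_J = 0 for all r ∈ Ann_A(h), and let (A, Ah ⊗ A) be the associated Lie–Rinehart algebra. A k-linear map φ : Ah ⊗ A → A is a right (A, Ah ⊗ A)-connection character on A if and only if it is of the form φ(a·h ⊗ b) = a·D(b) + {a,b}_J − a·{1,b}_J for some map D : A → A satisfying r·D(a) = {a,r}_J for all r ∈ Ann_A(h) and all a ∈ A. -/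
open TensorProduct

/-- Let `(A, J)` be a Jacobi algebra over a field `k`, `h ∈ A`
with `r * J a b = 0` whenever `r * h = 0`, and `(A, Ah ⊗ A)` the associated
Lie–Rinehart algebra (anchor `ρ (a·h⊗b) c = a * Φ_b c`). A `k`-linear map
`φ : Ah ⊗ A → A` is a right `(A, Ah ⊗ A)`-connection character on `A` iff
`φ (a·h⊗b) = a * D b + J a b - a * J 1 b` for some `D : A → A` with
`r * D a = J a r` for all `r ∈ Ann_A(h)`, `a ∈ A`. -/
theorem jacobi_Ah_connection_characterization
    (k A : Type*) [Field k] [CommRing A] [Algebra k A]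
    (J : A → A → A)
    (hbilₗ : ∀ (r : k) (a a' b : A), J (r • a + a') b = r • J a b + J a' b)
    (hbilᵣ : ∀ (r : k) (a b b' : A), J a (r • b + b') = r • J a b + J a b')
    (hskew : ∀ a b, J a b = - J b a)
    (hjacobi : ∀ a b c, J a (J b c) + J b (J c a) + J c (J a b) = 0)
    (hleib : ∀ a b c, J (a * b) c = a * J b c + b * J a c - a * b * J 1 c)
    (h : A)
    (hann : ∀ r : A, r * h = 0 → ∀ a b : A, r * J a b = 0)
    (φ : (LinearMap.range (LinearMap.lsmul A (A ⊗[k] A) h) : Submodule A (A ⊗[k] A)) → A)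
    (hφlin : ∀ (r : k) (u v : LinearMap.range (LinearMap.lsmul A (A ⊗[k] A) h)),
      φ (r • u + v) = r • φ u + φ v) :
    -- the right connection-character law `φ (c • θ) = c * φ θ - ρ θ c`
    (∀ (c a b : A),
      φ (c • (⟨a • (h • ((1 : A) ⊗ₜ[k] b)),
          Submodule.smul_mem _ a ⟨(1 : A) ⊗ₜ[k] b, rfl⟩⟩ :
          LinearMap.range (LinearMap.lsmul A (A ⊗[k] A) h)))
        = c * φ ⟨a • (h • ((1 : A) ⊗ₜ[k] b)),
            Submodule.smul_mem _ a ⟨(1 : A) ⊗ₜ[k] b, rfl⟩⟩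
          - a * (J b c + c * J 1 b))
    ↔
    (∃ D : A → A,
      (∀ r : A, r * h = 0 → ∀ a : A, r * D a = J a r) ∧
      (∀ a b : A,
        φ ⟨a • (h • ((1 : A) ⊗ₜ[k] b)),
            Submodule.smul_mem _ a ⟨(1 : A) ⊗ₜ[k] b, rfl⟩⟩
          = a * D b + J a b - a * J 1 b)) := by
  classical
  have hsm : ∀ c a b : A,
      (c • (⟨a • (h • ((1 : A) ⊗ₜ[k] b)),
          Submodule.smul_mem _ a ⟨(1 : A) ⊗ₜ[k] b, rfl⟩⟩ :
          LinearMap.range (LinearMap.lsmul A (A ⊗[k] A) h)))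
        = ⟨(c * a) • (h • ((1 : A) ⊗ₜ[k] b)),
            Submodule.smul_mem _ (c * a) ⟨(1 : A) ⊗ₜ[k] b, rfl⟩⟩ := by
    intro c a b
    apply Subtype.ext
    show c • (a • (h • ((1 : A) ⊗ₜ[k] b))) = (c * a) • (h • ((1 : A) ⊗ₜ[k] b))
    rw [smul_smul]
  have hφ0 : φ 0 = 0 := by
    have h2 := hφlin 1 0 0
    simp only [one_smul, add_zero] at h2
    have h3 : φ 0 + 0 = φ 0 + φ 0 := by rw [add_zero]; exact h2
    exact (add_left_cancel h3).symm
  constructor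
  · intro hlaw
    refine ⟨fun b => φ ⟨(1 : A) • (h • ((1 : A) ⊗ₜ[k] b)),
        Submodule.smul_mem _ (1 : A) ⟨(1 : A) ⊗ₜ[k] b, rfl⟩⟩, ?_, ?_⟩
    · intro r hr a
      have h0 : (⟨(r * 1) • (h • ((1 : A) ⊗ₜ[k] a)),
          Submodule.smul_mem _ (r * 1) ⟨(1 : A) ⊗ₜ[k] a, rfl⟩⟩ :
          LinearMap.range (LinearMap.lsmul A (A ⊗[k] A) h)) = 0 := by
        apply Subtype.ext
        show (r * 1) • (h • ((1 : A) ⊗ₜ[k] a)) = 0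
        rw [smul_smul, mul_one, hr, zero_smul]
      have h4 := hlaw r 1 a
      rw [hsm, h0, hφ0] at h4
      have h1 : r * J 1 a = 0 := hann r hr 1 a
      show r * φ ⟨(1 : A) • (h • ((1 : A) ⊗ₜ[k] a)),
        Submodule.smul_mem _ (1 : A) ⟨(1 : A) ⊗ₜ[k] a, rfl⟩⟩ = J a r
      linear_combination -h4 + h1
    · intro a b
      have h4 := hlaw a 1 b
      rw [hsm, mul_one] at h4
      have hsk : J b a = - J a b := hskew b a
      show φ ⟨a • (h • ((1 : A) ⊗ₜ[k] b)),
        Submodule.smul_mem _ a ⟨(1 : A) ⊗ₜ[k] b, rfl⟩⟩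
        = a * φ ⟨(1 : A) • (h • ((1 : A) ⊗ₜ[k] b)),
            Submodule.smul_mem _ (1 : A) ⟨(1 : A) ⊗ₜ[k] b, rfl⟩⟩ + J a b - a * J 1 b
      rw [h4, hsk]
      ring
  · rintro ⟨D, hD, hφeq⟩ c a b
    rw [hsm, hφeq, hφeq]
    have h1 : J (c * a) b = c * J a b + a * J c b - c * a * J 1 b := hleib c a b
    have h2 : J c b = - J b c := hskew c b
    rw [h1, h2]
    ring
end

section
/- Let (A, {•,•}_J) be a Jacobi algebra over a field k, h ∈ A with r·{•,•}_J = 0 for all r ∈ Ann_A(h). If there exists a right (A, Ah ⊗ A)-connection on A, then there exists a ∈ A such that a·r = {1, r}_J for all r ∈ Ann_A(h). -/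
/-!
Evaluate the connection character `φ` on `θ = h ⊗ 1`. For `r ∈ Ann_A(h)` we have `r • θ = 0`,
so the connection rule `φ(r • θ) = r φ(θ) - ρ(θ)(r)` reads `0 = r φ(θ) - ({1, r} + r {1, 1})`,
and `r {1, 1} = 0` by the hypothesis on `Ann_A(h)`. Hence `a = φ(θ)` works.
-/

open TensorProduct

theorem map_zero_of_map_smul_add {R M N : Type*} [Monoid R] [AddMonoid M] [MulAction R M]
    [AddLeftCancelMonoid N] [MulAction R N] {f : M → N}
    (hf : ∀ (r : R) (u v : M), f (r • u + v) = r • f u + f v) : f 0 = 0 := by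
  have h := hf 1 0 0
  rw [one_smul, one_smul, add_zero] at h
  exact left_eq_add.mp h

theorem smul_eq_zero_of_mem_range_lsmul {A M : Type*} [CommSemiring A] [AddCommMonoid M]
    [Module A M] {h r : A} (hr : r * h = 0) (x : LinearMap.range (LinearMap.lsmul A M h)) :
    r • x = 0 := by
  obtain ⟨x, m, rfl⟩ := x
  ext
  simp [smul_smul, hr]

theorem jacobi_Ah_connection_obstruction_general
    (k A : Type*) [Field k] [CommRing A] [Algebra k A]
    (J : A → A → A)
    (h : A)
    (hann : ∀ r : A, r * h = 0 → ∀ a b : A, r * J a b = 0)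
    -- existence of a right `(A, Ah ⊗ A)`-connection character on `A`
    (hconn : ∃ φ : (LinearMap.range (LinearMap.lsmul A (A ⊗[k] A) h) :
        Submodule A (A ⊗[k] A)) → A,
      (∀ (r : k) (u v : LinearMap.range (LinearMap.lsmul A (A ⊗[k] A) h)),
        φ (r • u + v) = r • φ u + φ v) ∧
      (∀ (c a b : A),
        φ (c • (⟨a • (h • ((1 : A) ⊗ₜ[k] b)),
            Submodule.smul_mem _ a ⟨(1 : A) ⊗ₜ[k] b, rfl⟩⟩ :
            LinearMap.range (LinearMap.lsmul A (A ⊗[k] A) h)))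
          = c * φ ⟨a • (h • ((1 : A) ⊗ₜ[k] b)),
              Submodule.smul_mem _ a ⟨(1 : A) ⊗ₜ[k] b, rfl⟩⟩
            - a * (J b c + c * J 1 b))) :
    ∃ a : A, ∀ r : A, r * h = 0 → a * r = J 1 r := by
  obtain ⟨φ, hlin, hφ⟩ := hconn
  refine ⟨φ ⟨(1 : A) • (h • ((1 : A) ⊗ₜ[k] (1 : A))),
      Submodule.smul_mem _ 1 ⟨(1 : A) ⊗ₜ[k] (1 : A), rfl⟩⟩, fun r hr => ?_⟩
  have key := hφ r 1 1
  rw [smul_eq_zero_of_mem_range_lsmul hr, map_zero_of_map_smul_add hlin] at key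
  linear_combination -key + hann r hr 1 1

/-- Let `(A, J)` be a Jacobi algebra over a field `k` and `h ∈ A`
with `r * J a b = 0` whenever `r * h = 0`. If there exists a right
`(A, Ah ⊗ A)`-connection on `A` (equivalently, a connection character
`φ : Ah ⊗ A → A`), then there exists `a ∈ A` with `a * r = J 1 r` for all
`r ∈ Ann_A(h)`. -/
theorem jacobi_Ah_connection_obstruction
    (k A : Type*) [Field k] [CommRing A] [Algebra k A]
    (J : A → A → A)
    (hbilₗ : ∀ (r : k) (a a' b : A), J (r • a + a') b = r • J a b + J a' b)
    (hbilᵣ : ∀ (r : k) (a b b' : A), J a (r • b + b') = r • J a b + J a b')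
    (hskew : ∀ a b, J a b = - J b a)
    (hjacobi : ∀ a b c, J a (J b c) + J b (J c a) + J c (J a b) = 0)
    (hleib : ∀ a b c, J (a * b) c = a * J b c + b * J a c - a * b * J 1 c)
    (h : A)
    (hann : ∀ r : A, r * h = 0 → ∀ a b : A, r * J a b = 0)
    -- existence of a right `(A, Ah ⊗ A)`-connection character on `A`
    (hconn : ∃ φ : (LinearMap.range (LinearMap.lsmul A (A ⊗[k] A) h) :
        Submodule A (A ⊗[k] A)) → A,
      (∀ (r : k) (u v : LinearMap.range (LinearMap.lsmul A (A ⊗[k] A) h)),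
        φ (r • u + v) = r • φ u + φ v) ∧
      (∀ (c a b : A),
        φ (c • (⟨a • (h • ((1 : A) ⊗ₜ[k] b)),
            Submodule.smul_mem _ a ⟨(1 : A) ⊗ₜ[k] b, rfl⟩⟩ :
            LinearMap.range (LinearMap.lsmul A (A ⊗[k] A) h)))
          = c * φ ⟨a • (h • ((1 : A) ⊗ₜ[k] b)),
              Submodule.smul_mem _ a ⟨(1 : A) ⊗ₜ[k] b, rfl⟩⟩
            - a * (J b c + c * J 1 b))) :
    ∃ a : A, ∀ r : A, r * h = 0 → a * r = J 1 r :=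
  jacobi_Ah_connection_obstruction_general k A J h hann hconn
end

section
/- Let A = k[x,y]/⟨xy, x², y²⟩ with the Jacobi bracket {a,b}_J = a·E(b) − E(a)·b where E is the derivation with E(x) = y, E(y) = 0. Then x ∈ Ann_A(y), {1,x}_J = y, and there exists no a ∈ A with a·x = y. Consequently, the Lie–Rinehart algebra (A, Ay ⊗ A) admits no right (A, Ay ⊗ A)-connection on A. -/
open TensorProduct MvPolynomial

set_option synthInstance.maxHeartbeats 1000000
set_option maxHeartbeats 2000000

/-- The algebra `A = k[x,y]/⟨xy, x², y²⟩`. -/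
abbrev HeisenbergAlg (k : Type*) [Field k] : Type _ :=
  MvPolynomial (Fin 2) k ⧸ Ideal.span
    ({X 0 * X 1, X 0 ^ 2, X 1 ^ 2} : Set (MvPolynomial (Fin 2) k))

/-- Let `A = k[x,y]/⟨xy, x², y²⟩` with the Jacobi bracket
`J a b = a * E b - E a * b`, where `E` is the derivation with `E x = y`,
`E y = 0`. Then `x ∈ Ann_A(y)`, `J 1 x = y`, and no `a ∈ A` satisfies
`a * x = y`; consequently the Lie–Rinehart algebra `(A, Ay ⊗ A)` admits no
right `(A, Ay ⊗ A)`-connection on `A`. -/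
theorem heisenberg_example_no_connection
    (k : Type*) [Field k]
    (E : Derivation k (HeisenbergAlg k) (HeisenbergAlg k))
    (x y : HeisenbergAlg k)
    (hx : x = Ideal.Quotient.mk _ (X 0)) (hy : y = Ideal.Quotient.mk _ (X 1))
    (hEx : E x = y) (hEy : E y = 0)
    (J : HeisenbergAlg k → HeisenbergAlg k → HeisenbergAlg k)
    (hJ : ∀ a b, J a b = a * E b - E a * b) :
    -- `x ∈ Ann_A(y)`
    (x * y = 0) ∧
    -- `{1, x}_J = y`
    (J 1 x = y) ∧
    -- no `a` with `a * x = y`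
    (¬ ∃ a : HeisenbergAlg k, a * x = y) ∧
    -- consequently, no right `(A, Ay ⊗ A)`-connection (character) on `A`
    (¬ ∃ δ : (LinearMap.range
          (LinearMap.lsmul (HeisenbergAlg k) (HeisenbergAlg k ⊗[k] HeisenbergAlg k) y) :
          Submodule (HeisenbergAlg k) (HeisenbergAlg k ⊗[k] HeisenbergAlg k)) →
          HeisenbergAlg k,
      (∀ (r : k) (u v : LinearMap.range
          (LinearMap.lsmul (HeisenbergAlg k) (HeisenbergAlg k ⊗[k] HeisenbergAlg k) y)),
        δ (r • u + v) = r • δ u + δ v) ∧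
      (∀ (c a b : HeisenbergAlg k),
        δ (c • (⟨a • (y • ((1 : HeisenbergAlg k) ⊗ₜ[k] b)),
            Submodule.smul_mem _ a ⟨(1 : HeisenbergAlg k) ⊗ₜ[k] b, rfl⟩⟩ :
            LinearMap.range
              (LinearMap.lsmul (HeisenbergAlg k) (HeisenbergAlg k ⊗[k] HeisenbergAlg k) y)))
          = c * δ ⟨a • (y • ((1 : HeisenbergAlg k) ⊗ₜ[k] b)),
              Submodule.smul_mem _ a ⟨(1 : HeisenbergAlg k) ⊗ₜ[k] b, rfl⟩⟩
            - a * (J b c + c * J 1 b))) := by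

  -- part 1
  have hxy : x * y = 0 := by
    rw [hx, hy, ← map_mul, Ideal.Quotient.eq_zero_iff_mem]
    exact Ideal.subset_span (by simp)
  have hE1 : E (1 : HeisenbergAlg k) = 0 := E.map_one_eq_zero
  have hJ1x : J 1 x = y := by rw [hJ, hE1, hEx]; ring
  have hJ11 : J (1 : HeisenbergAlg k) 1 = 0 := by rw [hJ, hE1]; ring
  -- part 3
  have hnoa : ¬ ∃ a : HeisenbergAlg k, a * x = y := by
    rintro ⟨a, ha⟩
    have hker : Ideal.span ({X 0 * X 1, X 0 ^ 2, X 1 ^ 2} : Set (MvPolynomial (Fin 2) k))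
        ≤ RingHom.ker (aeval (R := k) (![0, DualNumber.eps] : Fin 2 → DualNumber k)).toRingHom := by
      rw [Ideal.span_le]
      rintro p hp
      simp only [Set.mem_insert_iff, Set.mem_singleton_iff] at hp
      rcases hp with h | h | h <;> subst h <;>
        simp [RingHom.mem_ker, DualNumber.eps_mul_eps, sq]
    let φ : HeisenbergAlg k →ₐ[k] DualNumber k :=
      Ideal.Quotient.liftₐ _ (aeval (![0, DualNumber.eps] : Fin 2 → DualNumber k)) hker
    have hφx : φ x = 0 := by
      rw [hx]; show aeval _ (X 0) = 0; simp
    have hφy : φ y = DualNumber.eps := by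
      rw [hy]; show aeval _ (X 1) = _; simp
    have := congrArg φ ha
    rw [map_mul, hφx, hφy, mul_zero] at this
    have h2 := congrArg TrivSqZeroExt.snd this
    simp [DualNumber.snd_eps] at h2
  refine ⟨hxy, hJ1x, hnoa, ?_⟩
  rintro ⟨δ, hδ1, hδ2⟩
  have hδ0 : δ 0 = 0 := by
    have := hδ1 1 0 0
    simpa using this
  have key := hδ2 x 1 1
  rw [hJ1x, hJ11, mul_zero, add_zero, one_mul] at key
  have hzero : (x • (⟨(1 : HeisenbergAlg k) • (y • ((1 : HeisenbergAlg k) ⊗ₜ[k] (1 : HeisenbergAlg k))),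
      Submodule.smul_mem _ 1 ⟨(1 : HeisenbergAlg k) ⊗ₜ[k] (1 : HeisenbergAlg k), rfl⟩⟩ :
      LinearMap.range
        (LinearMap.lsmul (HeisenbergAlg k) (HeisenbergAlg k ⊗[k] HeisenbergAlg k) y))) = 0 := by
    apply Subtype.ext
    show x • ((1 : HeisenbergAlg k) • (y • ((1 : HeisenbergAlg k) ⊗ₜ[k] (1 : HeisenbergAlg k)))) = 0
    rw [one_smul, smul_tmul', smul_tmul', smul_eq_mul, smul_eq_mul, mul_one, hxy]
    simp
  rw [hzero, hδ0] at key
  exact hnoa ⟨δ _, by linear_combination -key⟩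
end

section
/- Let A be a commutative algebra with derivations E, F such that E(a)·F(E(b)) = 0 and E(a)·E(F(b)) = 0 for all a, b ∈ A. Then the bracket {a,b}_J := E(a)·F(b) − F(a)·E(b) + a·E(b) − E(a)·b satisfies the Jacobi identity and the Jacobi-algebra Leibniz rule {a, b·c}_J = b·{a,c}_J + c·{a,b}_J + {1,a}_J·b·c, hence makes A a Jacobi algebra with {1,•}_J = E. -/
/-- If `E, F` are derivations of a commutative algebra `A` with
`E(a)·F(E(b)) = 0` and `E(a)·E(F(b)) = 0` for all `a, b`, then the bracket
`{a,b} = E a * F b - F a * E b + a * E b - E a * b` satisfies the Jacobi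
identity and the Jacobi-algebra Leibniz rule, and `{1, ∙} = E`, making `A`
a Jacobi algebra. -/
theorem jacobi_from_two_derivations
    (R A : Type*) [CommRing R] [CommRing A] [Algebra R A]
    (E F : Derivation R A A)
    (hFE : ∀ a b : A, E a * F (E b) = 0)
    (hEF : ∀ a b : A, E a * E (F b) = 0) :
    -- Jacobi identity
    (∀ a b c : A,
        (E a * F (E b * F c - F b * E c + b * E c - E b * c)
          - F a * E (E b * F c - F b * E c + b * E c - E b * c)
          + a * E (E b * F c - F b * E c + b * E c - E b * c)
          - E a * (E b * F c - F b * E c + b * E c - E b * c))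
      + (E b * F (E c * F a - F c * E a + c * E a - E c * a)
          - F b * E (E c * F a - F c * E a + c * E a - E c * a)
          + b * E (E c * F a - F c * E a + c * E a - E c * a)
          - E b * (E c * F a - F c * E a + c * E a - E c * a))
      + (E c * F (E a * F b - F a * E b + a * E b - E a * b)
          - F c * E (E a * F b - F a * E b + a * E b - E a * b)
          + c * E (E a * F b - F a * E b + a * E b - E a * b)
          - E c * (E a * F b - F a * E b + a * E b - E a * b)) = 0) ∧
    -- Jacobi-algebra Leibniz rule `{a, b·c} = b·{a,c} + c·{a,b} + {1,a}·b·c`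
    (∀ a b c : A,
        E a * F (b * c) - F a * E (b * c) + a * E (b * c) - E a * (b * c)
          = b * (E a * F c - F a * E c + a * E c - E a * c)
            + c * (E a * F b - F a * E b + a * E b - E a * b)
            + (E 1 * F a - F 1 * E a + 1 * E a - E 1 * a) * b * c) ∧
    -- `{1, ∙} = E`
    (∀ a : A, E 1 * F a - F 1 * E a + 1 * E a - E 1 * a = E a) := by
  refine ⟨?_, ?_, ?_⟩
  · intro a b c
    simp only [map_sub, map_add, Derivation.leibniz, smul_eq_mul]
    linear_combination (1:ℤ) * (F (c)) * hFE (a) (b) + (-1:ℤ) * (F (b)) * hFE (a) (c) + (1:ℤ) * (b) * hFE (a) (c) + (-1:ℤ) * (c) * hFE (a) (b) + (-1:ℤ) * (F (a)) * hEF (b) (c) + (1:ℤ) * (F (a)) * hEF (c) (b) + (1:ℤ) * (a) * hEF (b) (c) + (-1:ℤ) * (a) * hEF (c) (b) + (1:ℤ) * (F (a)) * hFE (b) (c) + (-1:ℤ) * (F (c)) * hFE (b) (a) + (1:ℤ) * (c) * hFE (b) (a) + (-1:ℤ) * (a) * hFE (b) (c) + (-1:ℤ) * (F (b)) * hEF (c)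 (a) + (1:ℤ) * (F (b)) * hEF (a) (c) + (1:ℤ) * (b) * hEF (c) (a) + (-1:ℤ) * (b) * hEF (a) (c) + (1:ℤ) * (F (b)) * hFE (c) (a) + (-1:ℤ) * (F (a)) * hFE (c) (b) + (1:ℤ) * (a) * hFE (c) (b) + (-1:ℤ) * (b) * hFE (c) (a) + (-1:ℤ) * (F (c)) * hEF (a) (b) + (1:ℤ) * (F (c)) * hEF (b) (a) + (1:ℤ) * (c) * hEF (a) (b) + (-1:ℤ) * (c) * hEF (b) (a)
  · intro a b c
    simp only [map_sub, map_add, Derivation.leibniz, smul_eq_mul, Derivation.map_one_eq_zero, mul_zero, zero_mul]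
    ring
  · intro a
    simp only [Derivation.map_one_eq_zero, mul_zero, zero_mul]
    ring
end
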